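/- arXiv:1611.02384 — 5 statements merged into one kernel-verified Lean document; each statement's English description precedes it below -/
import Mathlib

section
/- The strong maximum principle for the horizontal mean curvature operator fails in dimension m = 2: with F⃗ = (−x², x¹) on ℝ², u := x¹x² + (x²)², v := x¹x², and U := {(x¹,x²) ∈ ℝ² : x¹ > 0 and x¹ + x² > 0}, one has: ∇u + F⃗ = (0, 2x¹ + 2x²) ≠ 0 and ∇v + F⃗ = (0, 2x¹) ≠ 0 on U (so U is nonsingular for both u and v); H_F(u) = 0 and H_F(v) = 0 on U; u ≥ v on U with u = v at every point of {(x¹, 0) : x¹ > 0} ⊆ U; and yet u is not identically equal to v on U. -/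
open Set Finset

noncomputable section

/-- The `k`-th standard basis vector of `ℝ^N` (zero if `k ≥ N`). -/
def ee (N k : ℕ) : Fin N → ℝ := fun i => if (i : ℕ) = k then 1 else 0

/-- The `k`-th partial derivative. -/
def pd (N k : ℕ) (f : (Fin N → ℝ) → ℝ) (x : Fin N → ℝ) : ℝ := fderiv ℝ f x (ee N k)

/-- `∇u + F`. -/
def gradF (N : ℕ) (F : (Fin N → ℝ) → (Fin N → ℝ)) (u : (Fin N → ℝ) → ℝ)
    (x : Fin N → ℝ) : Fin N → ℝ :=
  fun i => pd N i u x + F x i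

/-- The Legendrian (horizontal) normal `N_F(u) = (∇u + F)/|∇u + F|`. -/
def legN (N : ℕ) (F : (Fin N → ℝ) → (Fin N → ℝ)) (u : (Fin N → ℝ) → ℝ)
    (x : Fin N → ℝ) : Fin N → ℝ :=
  fun i => gradF N F u x i / Real.sqrt (∑ k, (gradF N F u x k) ^ 2)

/-- The horizontal (p-)mean curvature `H_F(u) = div N_F(u)`. -/
def Hmc (N : ℕ) (F : (Fin N → ℝ) → (Fin N → ℝ)) (u : (Fin N → ℝ) → ℝ)
    (x : Fin N → ℝ) : ℝ :=
  ∑ i : Fin N, pd N (i : ℕ) (fun y => legN N F u y i) x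

open Filter Topology

/-
Both `u` and `v` are members of the family `x¹x² + c (x²)²` (with `c = 1` and `c = 0`). For the
field `F = (−x², x¹)` the first component of `∇u + F` cancels identically, leaving
`∇u + F = (0, 2x¹ + 2c x²)`. On the open set where the second component is positive the Legendrian
normal is therefore the constant vector `(0, 1)`, so its divergence `H_F` vanishes there.
Meanwhile `u − v = (x²)² ≥ 0` vanishes exactly on the line `x² = 0`: the graphs of `u ≥ v` touch along a
line without coinciding.
-/

lemma pd_eq_of_hasFDerivAt {N : ℕ} {f : (Fin N → ℝ) → ℝ} {f' : (Fin N → ℝ) →L[ℝ] ℝ}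
    {x : Fin N → ℝ} (k : ℕ) (h : HasFDerivAt f f' x) : pd N k f x = f' (ee N k) := by
  rw [pd, h.fderiv]

lemma legN_eq_of_gradF_eq_smul {N : ℕ} {F : (Fin N → ℝ) → (Fin N → ℝ)}
    {u : (Fin N → ℝ) → ℝ} {y n : Fin N → ℝ} {t : ℝ} (ht : 0 < t) (hn : ∑ k, n k ^ 2 = 1)
    (h : gradF N F u y = t • n) : legN N F u y = n := by
  have hnorm : Real.sqrt (∑ k, (gradF N F u y k) ^ 2) = t := by
    simp only [h, Pi.smul_apply, smul_eq_mul, mul_pow, ← Finset.mul_sum, hn, mul_one,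
      Real.sqrt_sq ht.le]
  funext i
  rw [legN, hnorm, h, Pi.smul_apply, smul_eq_mul, mul_div_cancel_left₀ _ ht.ne']

lemma Hmc_eq_zero_of_legN_eventuallyEq_const {N : ℕ} {F : (Fin N → ℝ) → (Fin N → ℝ)}
    {u : (Fin N → ℝ) → ℝ} {x n : Fin N → ℝ} (h : legN N F u =ᶠ[𝓝 x] fun _ => n) :
    Hmc N F u x = 0 := by
  refine Finset.sum_eq_zero fun i _ => ?_
  have hi : (fun y => legN N F u y i) =ᶠ[𝓝 x] fun _ => n i := h.mono fun y hy => congrFun hy i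
  rw [pd, hi.fderiv_eq, fderiv_const_apply, zero_apply]

abbrev rotField : (Fin 2 → ℝ) → (Fin 2 → ℝ) := fun x => ![-(x 1), x 0]

def quadratic (c : ℝ) : (Fin 2 → ℝ) → ℝ := fun x => x 0 * x 1 + c * x 1 ^ 2

abbrev coord (i : Fin 2) : (Fin 2 → ℝ) →L[ℝ] ℝ :=
  ContinuousLinearMap.proj (R := ℝ) (φ := fun _ : Fin 2 => ℝ) i

lemma hasFDerivAt_quadratic (c : ℝ) (x : Fin 2 → ℝ) :
    HasFDerivAt (quadratic c) (x 1 • coord 0 + (x 0 + 2 * c * x 1) • coord 1) x := by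
  have h0 : HasFDerivAt (fun x : Fin 2 → ℝ => x 0) (coord 0) x := hasFDerivAt_apply 0 x
  have h1 : HasFDerivAt (fun x : Fin 2 → ℝ => x 1) (coord 1) x := hasFDerivAt_apply 1 x
  have h := (h0.fun_mul h1).fun_add ((h1.pow 2).const_mul c)
  refine h.congr_fderiv ?_
  ext y
  simp
  ring

lemma gradF_rotField_quadratic (c : ℝ) (x : Fin 2 → ℝ) :
    gradF 2 rotField (quadratic c) x = ![0, 2 * x 0 + 2 * c * x 1] := by
  funext i
  fin_cases i
  · simp [gradF, pd_eq_of_hasFDerivAt _ (hasFDerivAt_quadratic c x), ee]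
  · simp [gradF, pd_eq_of_hasFDerivAt _ (hasFDerivAt_quadratic c x), ee]
    ring

lemma gradF_rotField_quadratic_ne_zero {c : ℝ} {x : Fin 2 → ℝ} (hx : 0 < x 0 + c * x 1) :
    gradF 2 rotField (quadratic c) x ≠ 0 := by
  intro h
  have h1 := congrFun h 1
  simp only [gradF_rotField_quadratic, Matrix.cons_val_one, Matrix.cons_val_fin_one,
    Pi.zero_apply] at h1
  linarith

lemma Hmc_rotField_quadratic {c : ℝ} {x : Fin 2 → ℝ} (hx : 0 < x 0 + c * x 1) :
    Hmc 2 rotField (quadratic c) x = 0 := by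
  have hopen : IsOpen {y : Fin 2 → ℝ | 0 < y 0 + c * y 1} :=
    isOpen_lt continuous_const (by fun_prop)
  refine Hmc_eq_zero_of_legN_eventuallyEq_const (n := ![0, 1]) ?_
  filter_upwards [hopen.mem_nhds hx] with y hy
  refine legN_eq_of_gradF_eq_smul (t := 2 * y 0 + 2 * c * y 1) (by linarith) (by simp) ?_
  rw [gradF_rotField_quadratic]
  simp

/-- failure of the strong maximum principle for the horizontal
mean curvature operator in dimension `m = 2`, witnessed by `u = x¹x² + (x²)²`,
`v = x¹x²`, `F = (−x², x¹)` on `U = {x¹ > 0, x¹ + x² > 0}`. -/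
theorem smp_fails_in_dimension_two :
    let F : (Fin 2 → ℝ) → (Fin 2 → ℝ) := fun x => ![-(x 1), x 0]
    let u : (Fin 2 → ℝ) → ℝ := fun x => x 0 * x 1 + (x 1) ^ 2
    let v : (Fin 2 → ℝ) → ℝ := fun x => x 0 * x 1
    let U : Set (Fin 2 → ℝ) := {x | 0 < x 0 ∧ 0 < x 0 + x 1}
    (∀ x ∈ U, gradF 2 F u x = ![0, 2 * x 0 + 2 * x 1] ∧ gradF 2 F u x ≠ 0) ∧
    (∀ x ∈ U, gradF 2 F v x = ![0, 2 * x 0] ∧ gradF 2 F v x ≠ 0) ∧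
    (∀ x ∈ U, Hmc 2 F u x = 0) ∧
    (∀ x ∈ U, Hmc 2 F v x = 0) ∧
    (∀ x ∈ U, v x ≤ u x) ∧
    (∀ a : ℝ, 0 < a → (![a, 0] : Fin 2 → ℝ) ∈ U ∧ u ![a, 0] = v ![a, 0]) ∧
    ¬ (∀ x ∈ U, u x = v x) := by
  intro F u v U
  have hu : u = quadratic 1 := funext fun x => by simp [u, quadratic]
  have hv : v = quadratic 0 := funext fun x => by simp [v, quadratic]
  have hU : ∀ x ∈ U, 0 < x 0 + 1 * x 1 ∧ 0 < x 0 + 0 * x 1 := fun x hx => by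
    simpa using hx.symm
  refine ⟨fun x hx => ⟨?_, ?_⟩, fun x hx => ⟨?_, ?_⟩, fun x hx => ?_, fun x hx => ?_,
    fun x _ => ?_, fun a ha => ⟨?_, ?_⟩, fun h => ?_⟩
  · simpa [hu] using gradF_rotField_quadratic 1 x
  · exact hu ▸ gradF_rotField_quadratic_ne_zero (hU x hx).1
  · simpa [hv] using gradF_rotField_quadratic 0 x
  · exact hv ▸ gradF_rotField_quadratic_ne_zero (hU x hx).2
  · exact hu ▸ Hmc_rotField_quadratic (hU x hx).1
  · exact hv ▸ Hmc_rotField_quadratic (hU x hx).2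
  · simpa [u, v] using sq_nonneg (x 1)
  · simpa [U] using ha
  · simp [u, v]
  · simpa [u, v] using h ![1, 1] (by norm_num [U])
end
end

section
/- Let Ω ⊆ ℝ^{m+1} be open, θ a C^∞ nowhere-vanishing 1-form on Ω, and ξ := ker θ, a rank-m distribution. Let Σ ⊂ Ω be a C^∞ hypersurface and p₀ ∈ Σ a point near which ξ ≠ TΣ, so that ξ ∩ TΣ is a rank-(m−1) distribution along Σ near p₀. Assume that the restriction of dθ to ξ × ξ, as a skew bilinear form on ξ, has rank ≥ 3 at every point near p₀. Then for every C^∞ local frame X₁,...,X_{m−1} of ξ ∩ TΣ near p₀, the rank of £(X₁,...,X_{m−1}) equals m at every point near p₀. -/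
/-!
Every field of `£(X)` is tangent to the level sets of `g`: the tangency condition `dg(Z) = 0`
is preserved by brackets because `dg` is closed. Hence the rank is at most `m`. Conversely,
Cartan's formula `θ([X_α, X_β]) = -dθ(X_α, X_β)` shows that some bracket leaves `ξ`, unless
`dθ` vanishes on the hyperplane `ξ ∩ TΣ` of `ξ`. In that case the radical of `dθ|_ξ` would
contain `ξ ∩ TΣ ∩ ker dθ(·, u)` for any `u ∈ ξ` transverse to `Σ`, so it would have
codimension at most `2` in `ξ`. Together with the frame, that bracket spans `m` dimensions.
-/

open Set Finset

noncomputable section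

/-- Derivative of `f` along the vector field `X`. -/
def vApp {N : ℕ} (X : (Fin N → ℝ) → (Fin N → ℝ)) (f : (Fin N → ℝ) → ℝ) (x : Fin N → ℝ) : ℝ :=
  fderiv ℝ f x (X x)

/-- Lie bracket of vector fields. -/
def lieBr {N : ℕ} (X Y : (Fin N → ℝ) → (Fin N → ℝ)) : (Fin N → ℝ) → (Fin N → ℝ) :=
  fun x => fderiv ℝ Y x (X x) - fderiv ℝ X x (Y x)

/-- `£(S)`: the smallest `C^∞`-module of vector fields containing `S`
and closed under Lie bracket. -/
inductive LieSpan {N : ℕ} (Ω : Set (Fin N → ℝ)) (S : Set ((Fin N → ℝ) → (Fin N → ℝ))) :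
    ((Fin N → ℝ) → (Fin N → ℝ)) → Prop
  | base : ∀ X ∈ S, LieSpan Ω S X
  | smul : ∀ (f : (Fin N → ℝ) → ℝ) (X : (Fin N → ℝ) → (Fin N → ℝ)),
      ContDiffOn ℝ (⊤ : ℕ∞) f Ω → LieSpan Ω S X → LieSpan Ω S (fun x => f x • X x)
  | add : ∀ X Y, LieSpan Ω S X → LieSpan Ω S Y → LieSpan Ω S (fun x => X x + Y x)
  | bracket : ∀ X Y, LieSpan Ω S X → LieSpan Ω S Y → LieSpan Ω S (lieBr X Y)

/-- The exterior derivative of the 1-form `θ` at `x` evaluated on constant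
vector fields: `dθ(v,w) = (∇_vθ)(w) − (∇_wθ)(v)`. -/
def dForm {N : ℕ} (θ : (Fin N → ℝ) → ((Fin N → ℝ) →L[ℝ] ℝ)) (x v w : Fin N → ℝ) : ℝ :=
  fderiv ℝ θ x v w - fderiv ℝ θ x w v

open Filter Topology Module

theorem LinearMap.apply_eq_zero_of_mem_span {R M N P : Type*} [CommSemiring R]
    [AddCommMonoid M] [AddCommMonoid N] [AddCommMonoid P] [Module R M] [Module R N]
    [Module R P] {B : M →ₗ[R] N →ₗ[R] P} {s : Set M} {t : Set N}
    (h : ∀ v ∈ s, ∀ w ∈ t, B v w = 0) {v : M} {w : N} (hv : v ∈ Submodule.span R s)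
    (hw : w ∈ Submodule.span R t) : B v w = 0 := by
  induction hv, hw using Submodule.span_induction₂ with
  | mem_mem v w hv hw => exact h v hv w hw
  | _ => simp_all

section LinearAlgebra

variable {K V : Type*} [Field K] [AddCommGroup V] [Module K V] [FiniteDimensional K V]

theorem finrank_le_finrank_inf_ker_add_one (p : Submodule K V) (f : Dual K V) :
    finrank K p ≤ finrank K (p ⊓ LinearMap.ker f : Submodule K V) + 1 := by
  rcases eq_or_ne f 0 with rfl | hf
  · rw [LinearMap.ker_zero, inf_top_eq]
    omega
  · have h₁ := Submodule.finrank_sup_add_finrank_inf_eq p (LinearMap.ker f)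
    have h₂ := (p ⊔ LinearMap.ker f).finrank_le
    have h₃ := Dual.finrank_ker_add_one_of_ne_zero hf
    omega

theorem finrank_le_finrank_radical_add_two {B : V →ₗ[K] V →ₗ[K] K} {p : Submodule K V}
    {G : Dual K V} (hB : ∀ v ∈ p ⊓ LinearMap.ker G, ∀ w ∈ p ⊓ LinearMap.ker G, B v w = 0) :
    finrank K p ≤
      finrank K (Submodule.span K {v | v ∈ p ∧ ∀ w ∈ p, B v w = 0}) + 2 := by
  set R := Submodule.span K {v | v ∈ p ∧ ∀ w ∈ p, B v w = 0}
  by_cases hpG : p ≤ LinearMap.ker G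
  · have hpR : p ≤ R := fun v hv =>
      Submodule.subset_span ⟨hv, fun w hw => hB v ⟨hv, hpG hv⟩ w ⟨hw, hpG hw⟩⟩
    have := Submodule.finrank_mono hpR
    omega
  obtain ⟨u, hup, huG⟩ := SetLike.not_le_iff_exists.mp hpG
  replace huG : G u ≠ 0 := huG
  set W := p ⊓ LinearMap.ker G
  have hWR : W ⊓ LinearMap.ker (B.flip u) ≤ R := by
    rintro v ⟨hvW, hvu⟩
    refine Submodule.subset_span ⟨hvW.1, fun w hw => ?_⟩
    -- split `w` along `p = W ⊕ K u`
    have hw' : w - (G w / G u) • u ∈ W :=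
      ⟨p.sub_mem hw (p.smul_mem _ hup), by simp [LinearMap.mem_ker, huG]⟩
    have hvu' : B v u = 0 := hvu
    calc B v w = B v (w - (G w / G u) • u) + (G w / G u) * B v u := by simp
      _ = 0 := by rw [hB v hvW _ hw', hvu']; ring
  have h₁ : finrank K p ≤ finrank K W + 1 := finrank_le_finrank_inf_ker_add_one p G
  have h₂ := finrank_le_finrank_inf_ker_add_one W (B.flip u)
  have h₃ := Submodule.finrank_mono hWR
  omega

theorem exists_apply_ne_zero_of_span_eq_inf_ker {ι : Type*} {B : V →ₗ[K] V →ₗ[K] K}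
    {p : Submodule K V} {G : Dual K V} {v : ι → V}
    (hv : Submodule.span K (Set.range v) = p ⊓ LinearMap.ker G)
    (hrank : finrank K (Submodule.span K {w | w ∈ p ∧ ∀ w' ∈ p, B w w' = 0}) + 3 ≤
      finrank K p) :
    ∃ α β, B (v α) (v β) ≠ 0 := by
  by_contra! h
  have hB : ∀ w ∈ p ⊓ LinearMap.ker G, ∀ w' ∈ p ⊓ LinearMap.ker G, B w w' = 0 := by
    rw [← hv]
    refine fun w hw w' hw' => B.apply_eq_zero_of_mem_span ?_ hw hw'
    rintro _ ⟨α, rfl⟩ _ ⟨β, rfl⟩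
    exact h α β
  have := finrank_le_finrank_radical_add_two hB
  omega

theorem finrank_add_one_eq_of_lt_of_le_ker {W S : Submodule K V} {f : Dual K V} (hf : f ≠ 0)
    (hWS : W < S) (hSf : S ≤ LinearMap.ker f) (hW : finrank K V ≤ finrank K W + 2) :
    finrank K S + 1 = finrank K V := by
  have h₁ := Submodule.finrank_lt_finrank_of_lt hWS
  have h₂ := Submodule.finrank_mono hSf
  have h₃ := Dual.finrank_ker_add_one_of_ne_zero hf
  omega

end LinearAlgebra

section Calculus

variable {𝕜 E F : Type*} [NontriviallyNormedField 𝕜] [NormedAddCommGroup E] [NormedSpace 𝕜 E]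
  [NormedAddCommGroup F] [NormedSpace 𝕜 F]

theorem fderiv_clm_apply_add_eq_zero {θ : E → E →L[𝕜] F} {X : E → E} {x : E}
    (hθ : DifferentiableAt 𝕜 θ x) (hX : DifferentiableAt 𝕜 X x)
    (h₀ : ∀ᶠ y in 𝓝 x, θ y (X y) = 0) (v : E) :
    fderiv 𝕜 θ x v (X x) + θ x (fderiv 𝕜 X x v) = 0 := by
  have h := congrArg (· v) (fderiv_clm_apply hθ hX)
  rw [EventuallyEq.fderiv_eq (f := fun _ => (0 : F)) h₀, fderiv_const_apply] at h
  simpa [add_comm] using h.symm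

end Calculus

section VectorFields

variable {N : ℕ}

theorem apply_lieBr_eq_neg_dForm {θ : (Fin N → ℝ) → (Fin N → ℝ) →L[ℝ] ℝ}
    {X Y : (Fin N → ℝ) → Fin N → ℝ} {x : Fin N → ℝ} (hθ : DifferentiableAt ℝ θ x)
    (hX : DifferentiableAt ℝ X x) (hY : DifferentiableAt ℝ Y x)
    (hθX : ∀ᶠ y in 𝓝 x, θ y (X y) = 0) (hθY : ∀ᶠ y in 𝓝 x, θ y (Y y) = 0) :
    θ x (lieBr X Y x) = -dForm θ x (X x) (Y x) := by
  have h₁ := fderiv_clm_apply_add_eq_zero hθ hX hθX (Y x)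
  have h₂ := fderiv_clm_apply_add_eq_zero hθ hY hθY (X x)
  simp only [lieBr, dForm, map_sub]
  linarith

theorem dForm_fderiv_eq_zero {g : (Fin N → ℝ) → ℝ} {x : Fin N → ℝ} (hg : ContDiffAt ℝ 2 g x)
    (v w : Fin N → ℝ) : dForm (fderiv ℝ g) x v w = 0 :=
  sub_eq_zero.mpr (hg.isSymmSndFDerivAt (by simp) v w)

variable {U : Set (Fin N → ℝ)}

theorem contDiffOn_lieBr (hU : IsOpen U) {X Y : (Fin N → ℝ) → Fin N → ℝ}
    (hX : ContDiffOn ℝ (⊤ : ℕ∞) X U) (hY : ContDiffOn ℝ (⊤ : ℕ∞) Y U) :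
    ContDiffOn ℝ (⊤ : ℕ∞) (lieBr X Y) U :=
  ((hY.fderiv_of_isOpen hU le_rfl).clm_apply hX).sub
    ((hX.fderiv_of_isOpen hU le_rfl).clm_apply hY)

namespace LieSpan

variable {S : Set ((Fin N → ℝ) → Fin N → ℝ)} {Z : (Fin N → ℝ) → Fin N → ℝ}

theorem contDiffOn (hU : IsOpen U) (hS : ∀ X ∈ S, ContDiffOn ℝ (⊤ : ℕ∞) X U)
    (hZ : LieSpan U S Z) : ContDiffOn ℝ (⊤ : ℕ∞) Z U := by
  induction hZ with
  | base X hX => exact hS X hX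
  | smul f _ hf _ ih => exact hf.smul ih
  | add _ _ _ _ ih₁ ih₂ => exact ih₁.add ih₂
  | bracket _ _ _ _ ih₁ ih₂ => exact contDiffOn_lieBr hU ih₁ ih₂

theorem fderiv_apply_eq_zero (hU : IsOpen U) (hS : ∀ X ∈ S, ContDiffOn ℝ (⊤ : ℕ∞) X U)
    {g : (Fin N → ℝ) → ℝ} (hg : ContDiffOn ℝ (⊤ : ℕ∞) g U)
    (hSg : ∀ X ∈ S, ∀ y ∈ U, fderiv ℝ g y (X y) = 0) (hZ : LieSpan U S Z) :
    ∀ y ∈ U, fderiv ℝ g y (Z y) = 0 := by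
  induction hZ with
  | base X hX => exact hSg X hX
  | smul f _ _ _ ih => intro y hy; simp [ih y hy]
  | add _ _ _ _ ih₁ ih₂ => intro y hy; simp [ih₁ y hy, ih₂ y hy]
  | bracket Z₁ Z₂ hZ₁ hZ₂ ih₁ ih₂ =>
    intro y hy
    have hdiff {Z} (hZ : LieSpan U S Z) : DifferentiableAt ℝ Z y :=
      ((hZ.contDiffOn hU hS).contDiffAt (hU.mem_nhds hy)).differentiableAt (by simp)
    have hgy : ContDiffAt ℝ 2 g y := (hg.contDiffAt (hU.mem_nhds hy)).of_le (by norm_cast)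
    have hdg : DifferentiableAt ℝ (fderiv ℝ g) y :=
      (hgy.fderiv_right (m := 1) le_rfl).differentiableAt one_ne_zero
    rw [apply_lieBr_eq_neg_dForm hdg (hdiff hZ₁) (hdiff hZ₂)
      (eventually_of_mem (hU.mem_nhds hy) ih₁) (eventually_of_mem (hU.mem_nhds hy) ih₂),
      dForm_fderiv_eq_zero hgy, neg_zero]

theorem span_apply_le_ker_fderiv (hU : IsOpen U) (hS : ∀ X ∈ S, ContDiffOn ℝ (⊤ : ℕ∞) X U)
    {g : (Fin N → ℝ) → ℝ} (hg : ContDiffOn ℝ (⊤ : ℕ∞) g U)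
    (hSg : ∀ X ∈ S, ∀ y ∈ U, fderiv ℝ g y (X y) = 0) {x : Fin N → ℝ} (hx : x ∈ U) :
    Submodule.span ℝ {v | ∃ Z, LieSpan U S Z ∧ Z x = v} ≤
      LinearMap.ker ((fderiv ℝ g x) : (Fin N → ℝ) →ₗ[ℝ] ℝ) := by
  refine Submodule.span_le.mpr ?_
  rintro _ ⟨Z, hZ, rfl⟩
  exact hZ.fderiv_apply_eq_zero hU hS hg hSg x hx

end LieSpan

end VectorFields

theorem lie_span_rank_of_dtheta_rank_ge_three_general
    (m : ℕ)
    (Ω : Set (Fin (m + 1) → ℝ))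
    (θ : (Fin (m + 1) → ℝ) → ((Fin (m + 1) → ℝ) →L[ℝ] ℝ))
    (hθsmooth : ContDiffOn ℝ (⊤ : ℕ∞) θ Ω)
    -- the hypersurface `Σ = {g = 0}` through `p₀`
    (g : (Fin (m + 1) → ℝ) → ℝ) (hg : ContDiffOn ℝ (⊤ : ℕ∞) g Ω)
    -- a neighborhood of `p₀` on which everything is nondegenerate
    (V : Set (Fin (m + 1) → ℝ)) (hVopen : IsOpen V) (hVΩ : V ⊆ Ω)
    (hdg : ∀ x ∈ V, fderiv ℝ g x ≠ 0)
    -- `dθ|_{ξ×ξ}` has rank `≥ 3` at every point of `V`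
    (hrank : ∀ x ∈ V,
      Module.finrank ℝ
          (Submodule.span ℝ
            {v : Fin (m + 1) → ℝ | θ x v = 0 ∧ ∀ w, θ x w = 0 → dForm θ x v w = 0}) + 3 ≤
        Module.finrank ℝ (LinearMap.ker ((θ x) : (Fin (m + 1) → ℝ) →ₗ[ℝ] ℝ))) :
    -- conclusion: every smooth frame of `ξ ∩ TΣ` on `V` has Lie span of rank `m`
    ∀ X : Fin (m - 1) → ((Fin (m + 1) → ℝ) → (Fin (m + 1) → ℝ)),
      (∀ α, ContDiffOn ℝ (⊤ : ℕ∞) (X α) V) →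
      (∀ x ∈ V, LinearIndependent ℝ (fun α => X α x)) →
      (∀ x ∈ V, Submodule.span ℝ (Set.range fun α => X α x) =
        LinearMap.ker ((θ x) : (Fin (m + 1) → ℝ) →ₗ[ℝ] ℝ) ⊓
          LinearMap.ker ((fderiv ℝ g x) : (Fin (m + 1) → ℝ) →ₗ[ℝ] ℝ)) →
      ∀ x ∈ V,
        Module.finrank ℝ
          (Submodule.span ℝ {v | ∃ Z, LieSpan V (Set.range X) Z ∧ Z x = v}) = m := by
  intro X hXsm hXli hXspan x hx
  set S := Submodule.span ℝ {v | ∃ Z, LieSpan V (Set.range X) Z ∧ Z x = v}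
  have hXmem (α) (y) (hy : y ∈ V) : X α y ∈ LinearMap.ker ((θ y) : _ →ₗ[ℝ] ℝ) ⊓
      LinearMap.ker ((fderiv ℝ g y) : _ →ₗ[ℝ] ℝ) :=
    hXspan y hy ▸ Submodule.subset_span ⟨α, rfl⟩
  have hS_le : S ≤ LinearMap.ker ((fderiv ℝ g x) : _ →ₗ[ℝ] ℝ) :=
    LieSpan.span_apply_le_ker_fderiv hVopen (by rintro _ ⟨α, rfl⟩; exact hXsm α) (hg.mono hVΩ)
      (by rintro _ ⟨α, rfl⟩ y hy; exact (hXmem α y hy).2) hx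
  -- `D - D.flip` is `dForm θ x` as a bilinear map
  set D := (fderiv ℝ θ x).toLinearMap₁₂
  obtain ⟨α, β, hαβ⟩ := exists_apply_ne_zero_of_span_eq_inf_ker (B := D - D.flip)
    (hXspan x hx) (hrank x hx)
  have hnhds : V ∈ 𝓝 x := hVopen.mem_nhds hx
  have hXdiff (α) : DifferentiableAt ℝ (X α) x :=
    ((hXsm α).contDiffAt hnhds).differentiableAt (by simp)
  have hXθ (α) : ∀ᶠ y in 𝓝 x, θ y (X α y) = 0 :=
    eventually_of_mem hnhds fun y hy => (hXmem α y hy).1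
  have hbracket : θ x (lieBr (X α) (X β) x) ≠ 0 := by
    rw [apply_lieBr_eq_neg_dForm (((hθsmooth.mono hVΩ).contDiffAt hnhds).differentiableAt
      (by simp)) (hXdiff α) (hXdiff β) (hXθ α) (hXθ β)]
    exact neg_ne_zero.mpr hαβ
  have hframe : Submodule.span ℝ (Set.range fun α => X α x) < S := by
    refine SetLike.lt_iff_le_and_exists.mpr ⟨Submodule.span_le.mpr ?_, lieBr (X α) (X β) x,
      ?_, fun h => hbracket (hXspan x hx ▸ h).1⟩
    · rintro _ ⟨α, rfl⟩
      exact Submodule.subset_span ⟨X α, .base _ ⟨α, rfl⟩, rfl⟩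
    · exact Submodule.subset_span ⟨_, .bracket _ _ (.base _ ⟨α, rfl⟩) (.base _ ⟨β, rfl⟩), rfl⟩
  have hdg' : ((fderiv ℝ g x) : (Fin (m + 1) → ℝ) →ₗ[ℝ] ℝ) ≠ 0 :=
    fun h => hdg x hx (by exact_mod_cast h)
  have hrankS := finrank_add_one_eq_of_lt_of_le_ker hdg' hframe hS_le (by
    rw [finrank_span_eq_card (hXli x hx), Fintype.card_fin, Module.finrank_fin_fun]
    omega)
  rw [Module.finrank_fin_fun] at hrankS
  omega

/-- Proposition 4.1. Let `θ` be a smooth nowhere vanishing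
1-form on `Ω ⊆ ℝ^{m+1}` with kernel distribution `ξ`, and `Σ = {g = 0}` a smooth
hypersurface through `p₀` with `ξ ≠ TΣ` near `p₀`. If `dθ|_{ξ×ξ}` has rank `≥ 3`
at every point near `p₀`, then every smooth local frame `X₁,...,X_{m−1}` of
`ξ ∩ TΣ` near `p₀` satisfies `rank £(X₁,...,X_{m−1}) = m` at every point
near `p₀`. -/
theorem lie_span_rank_of_dtheta_rank_ge_three
    (m : ℕ)
    (Ω : Set (Fin (m + 1) → ℝ)) (hΩopen : IsOpen Ω)
    (θ : (Fin (m + 1) → ℝ) → ((Fin (m + 1) → ℝ) →L[ℝ] ℝ))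
    (hθsmooth : ContDiffOn ℝ (⊤ : ℕ∞) θ Ω)
    (hθne : ∀ x ∈ Ω, θ x ≠ 0)
    -- the hypersurface `Σ = {g = 0}` through `p₀`
    (g : (Fin (m + 1) → ℝ) → ℝ) (hg : ContDiffOn ℝ (⊤ : ℕ∞) g Ω)
    (p₀ : Fin (m + 1) → ℝ) (hp₀ : p₀ ∈ Ω) (hgp₀ : g p₀ = 0)
    -- a neighborhood of `p₀` on which everything is nondegenerate
    (V : Set (Fin (m + 1) → ℝ)) (hVopen : IsOpen V) (hpV : p₀ ∈ V) (hVΩ : V ⊆ Ω)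
    (hdg : ∀ x ∈ V, fderiv ℝ g x ≠ 0)
    (hxine : ∀ x ∈ V,
      LinearMap.ker ((θ x) : (Fin (m + 1) → ℝ) →ₗ[ℝ] ℝ) ≠
        LinearMap.ker ((fderiv ℝ g x) : (Fin (m + 1) → ℝ) →ₗ[ℝ] ℝ))
    -- `dθ|_{ξ×ξ}` has rank `≥ 3` at every point of `V`
    (hrank : ∀ x ∈ V,
      Module.finrank ℝ
          (Submodule.span ℝ
            {v : Fin (m + 1) → ℝ | θ x v = 0 ∧ ∀ w, θ x w = 0 → dForm θ x v w = 0}) + 3 ≤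
        Module.finrank ℝ (LinearMap.ker ((θ x) : (Fin (m + 1) → ℝ) →ₗ[ℝ] ℝ))) :
    -- conclusion: every smooth frame of `ξ ∩ TΣ` on `V` has Lie span of rank `m`
    ∀ X : Fin (m - 1) → ((Fin (m + 1) → ℝ) → (Fin (m + 1) → ℝ)),
      (∀ α, ContDiffOn ℝ (⊤ : ℕ∞) (X α) V) →
      (∀ x ∈ V, LinearIndependent ℝ (fun α => X α x)) →
      (∀ x ∈ V, Submodule.span ℝ (Set.range fun α => X α x) =
        LinearMap.ker ((θ x) : (Fin (m + 1) → ℝ) →ₗ[ℝ] ℝ) ⊓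
          LinearMap.ker ((fderiv ℝ g x) : (Fin (m + 1) → ℝ) →ₗ[ℝ] ℝ)) →
      ∀ x ∈ V,
        Module.finrank ℝ
          (Submodule.span ℝ {v | ∃ Z, LieSpan V (Set.range X) Z ∧ Z x = v}) = m :=
  lie_span_rank_of_dtheta_rank_ge_three_general m Ω θ hθsmooth g hg V hVopen hVΩ hdg hrank
end
end

section
/- Let Ω ⊆ ℝ^{m+1} be open and 0 ≤ l ≤ m. Let θ¹,...,θ^l and ω¹,...,ω^{m+1−l} be C^∞ 1-forms and X₁,...,X_{m+1−l}, T₁,...,T_l C^∞ vector fields on Ω such that at every point {X₁,...,X_{m+1−l}, T₁,...,T_l} is a frame of ℝ^{m+1} dual to the coframe {ω¹,...,ω^{m+1−l}, θ¹,...,θ^l}. Define C^∞ functions W_{ij}^α by [X_i, X_j] = Σ_{α=1}^l W_{ij}^α T_α modulo the span of X₁,...,X_{m+1−l}. Suppose (m+1−l)(m−l)/2 ≥ l and that at every point the skew-symmetric (m+1−l)×(m+1−l) matrices (W_{ij}^α)_{i,j}, for α = 1,...,l, are linearly independent. Then the rank of £(X₁,...,X_{m+1−l}) equals m+1 at every point.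 Equivalently, this linear-independence condition holds if and only if the (m−l)-forms dθ^α ⌟ (ω¹ ∧ ... ∧ ω^{m+1−l}), α = 1,...,l, are linearly independent at every point. -/
open Set Finset

noncomputable section

/-- Insert `a`, `b` in front of the `(K−2)`-tuple `v`, producing a `K`-tuple. -/
def ins2 {N : ℕ} (K : ℕ) (a b : Fin N → ℝ) (v : Fin (K - 2) → (Fin N → ℝ)) :
    Fin K → (Fin N → ℝ) :=
  fun t =>
    if h0 : (t : ℕ) = 0 then a
    else if h1 : (t : ℕ) = 1 then b
    else v ⟨(t : ℕ) - 2, by have := t.isLt; omega⟩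

/-- The top exterior product `ω¹ ∧ ... ∧ ω^K` of the coframe `ω` evaluated at
`x` on a `K`-tuple of vectors, as a determinant. -/
def wedgeEval {N : ℕ} (K : ℕ) (ω : Fin K → ((Fin N → ℝ) → ((Fin N → ℝ) →L[ℝ] ℝ)))
    (x : Fin N → ℝ) (w : Fin K → (Fin N → ℝ)) : ℝ :=
  Matrix.det (Matrix.of fun i j => ω i x (w j))

/-- The interior product `dθ^α ⌟ (ω¹ ∧ ... ∧ ω^K)` at `x`, as a `(K−2)`-form
(represented by its evaluation on tuples of vectors), contracted by means of the
frame `X` dual to `ω`. -/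
def contrForm {N : ℕ} (K : ℕ) (ω : Fin K → ((Fin N → ℝ) → ((Fin N → ℝ) →L[ℝ] ℝ)))
    (X : Fin K → ((Fin N → ℝ) → (Fin N → ℝ)))
    (θα : (Fin N → ℝ) → ((Fin N → ℝ) →L[ℝ] ℝ)) (x : Fin N → ℝ)
    (v : Fin (K - 2) → (Fin N → ℝ)) : ℝ :=
  ∑ i : Fin K, ∑ j : Fin K,
    if (i : ℕ) < (j : ℕ) then
      dForm θα x (X i x) (X j x) * wedgeEval K ω x (ins2 K (X i x) (X j x) v)
    else 0

/-!
The values at `x` of the `X_k` and of the brackets `[X_i, X_j]` lie in the span of `£(X)`, and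
modulo the `X_k` the bracket `[X_i, X_j]` is `∑ α, W_{ij}^α T_α`. Any functional on the quotient
by that span gives coefficients `c_α` with `∑ α, c_α W^α = 0`, so linear independence of the
`W^α` forces every `T_β` into the span, and the frame `{X, T}` gives full rank.

For the equivalence, Cartan's formula `dθ(Y, Z) = Y θ(Z) - Z θ(Y) - θ([Y, Z])` gives
`dθ^α(X_i, X_j) = -W_{ij}^α`, so `dθ^α ⌟ (ω¹ ∧ ... ∧ ω^K)` is the image of the skew matrix
`-W^α` under a linear map that is injective on skew matrices: on the frame vectors `X_k`,
`k ∉ {i, j}`, it picks out the `(i, j)` entry.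
-/

theorem Submodule.mem_of_linearIndependent_of_sum_smul_mem {K V ι m n : Type*} [Field K]
    [AddCommGroup V] [Module K V] [Fintype ι] {M : ι → Matrix m n K}
    (hM : LinearIndependent K M) {P : Submodule K V} {T : ι → V}
    (hP : ∀ i j, ∑ α, M α i j • T α ∈ P) (β : ι) : T β ∈ P := by
  rw [← Submodule.Quotient.mk_eq_zero, ← Module.forall_dual_apply_eq_zero_iff K]
  intro φ
  refine Fintype.linearIndependent_iff.1 hM (fun α => φ (Submodule.Quotient.mk (T α))) ?_ β
  ext i j
  have hij : (φ ∘ₗ P.mkQ) (∑ α, M α i j • T α) = 0 := by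
    rw [LinearMap.comp_apply, Submodule.mkQ_apply, (Submodule.Quotient.mk_eq_zero P).2 (hP i j),
      map_zero]
  rw [map_sum] at hij
  simpa [Matrix.sum_apply, mul_comm] using hij

theorem LinearMap.apply_eq_coeff_of_sub_mem_span {R V ι κ : Type*} [CommRing R]
    [AddCommGroup V] [Module R V] [Fintype κ] [DecidableEq κ] {f : V →ₗ[R] R} {X : ι → V}
    {T : κ → V} {α : κ}
    (hX : ∀ k, f (X k) = 0) (hT : ∀ β, f (T β) = if α = β then 1 else 0)
    {v : V} {c : κ → R} (hv : v - ∑ β, c β • T β ∈ Submodule.span R (Set.range X)) :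
    f v = c α := by
  have hspan : Submodule.span R (Set.range X) ≤ LinearMap.ker f :=
    Submodule.span_le.2 (Set.range_subset_iff.2 hX)
  have h0 := hspan hv
  simpa [hT, sub_eq_zero] using h0

theorem fderiv_apply_eq_neg_apply_fderiv_of_eventually_eq_zero {𝕜 E F : Type*}
    [NontriviallyNormedField 𝕜] [NormedAddCommGroup E] [NormedSpace 𝕜 E]
    [NormedAddCommGroup F] [NormedSpace 𝕜 F] {θ : E → F →L[𝕜] 𝕜} {Y : E → F} {x : E}
    (hθ : DifferentiableAt 𝕜 θ x) (hY : DifferentiableAt 𝕜 Y x)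
    (h0 : ∀ᶠ y in nhds x, θ y (Y y) = 0) (u : E) :
    fderiv 𝕜 θ x u (Y x) = -θ x (fderiv 𝕜 Y x u) := by
  have hderiv := (hθ.hasFDerivAt.clm_apply hY.hasFDerivAt).fderiv
  rw [Filter.EventuallyEq.fderiv_eq (f := fun _ => (0 : 𝕜)) h0, fderiv_fun_const] at hderiv
  have hu := congrArg (fun L : E →L[𝕜] 𝕜 => L u) hderiv
  simp only [Pi.zero_apply, zero_apply, add_apply,
    ContinuousLinearMap.comp_apply, ContinuousLinearMap.flip_apply] at hu
  linear_combination -hu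

theorem dForm_eq_neg_apply_lieBr {N : ℕ} {θ : (Fin N → ℝ) → (Fin N → ℝ) →L[ℝ] ℝ}
    {Y Z : (Fin N → ℝ) → (Fin N → ℝ)} {x : Fin N → ℝ} (hθ : DifferentiableAt ℝ θ x)
    (hY : DifferentiableAt ℝ Y x) (hZ : DifferentiableAt ℝ Z x)
    (hθY : ∀ᶠ y in nhds x, θ y (Y y) = 0) (hθZ : ∀ᶠ y in nhds x, θ y (Z y) = 0) :
    dForm θ x (Y x) (Z x) = -θ x (lieBr Y Z x) := by
  rw [dForm, lieBr, fderiv_apply_eq_neg_apply_fderiv_of_eventually_eq_zero hθ hZ hθZ,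
    fderiv_apply_eq_neg_apply_fderiv_of_eventually_eq_zero hθ hY hθY, map_sub]
  ring

theorem Matrix.det_submatrix_id_ne_zero_iff {n R : Type*} [Fintype n] [DecidableEq n]
    [CommRing R] {M : Matrix n n R} (hM : M.det ≠ 0) (σ : n → n) :
    (M.submatrix id σ).det ≠ 0 ↔ Function.Injective σ := by
  refine ⟨fun h b₁ b₂ hb => by_contra fun hne => h (det_zero_of_column_eq hne (by simp [hb])),
    fun hσ => ?_⟩
  set π := Equiv.ofBijective σ (Finite.injective_iff_bijective.1 hσ)
  rw [show σ = π from rfl, det_permute']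
  rcases Int.units_eq_one_or (Equiv.Perm.sign π) with h | h <;> simp [h, hM]

def contrOfMatrix {N : ℕ} (K : ℕ) (ω : Fin K → (Fin N → ℝ) → (Fin N → ℝ) →L[ℝ] ℝ)
    (X : Fin K → (Fin N → ℝ) → (Fin N → ℝ)) (x : Fin N → ℝ) :
    Matrix (Fin K) (Fin K) ℝ →ₗ[ℝ] (Fin (K - 2) → Fin N → ℝ) → ℝ where
  toFun B v := ∑ i : Fin K, ∑ j : Fin K,
    if (i : ℕ) < (j : ℕ) then B i j * wedgeEval K ω x (ins2 K (X i x) (X j x) v) else 0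
  map_add' B C := by
    ext v
    simp only [Pi.add_apply, ← Finset.sum_add_distrib]
    refine Finset.sum_congr rfl fun i _ => Finset.sum_congr rfl fun j _ => ?_
    split_ifs <;> simp [add_mul]
  map_smul' c B := by
    ext v
    simp only [Matrix.smul_apply, smul_eq_mul, mul_assoc, RingHom.id_apply, Pi.smul_apply,
      Finset.mul_sum, mul_ite, mul_zero]

theorem contrForm_eq_contrOfMatrix {N K : ℕ} (ω : Fin K → (Fin N → ℝ) → (Fin N → ℝ) →L[ℝ] ℝ)
    (X : Fin K → (Fin N → ℝ) → (Fin N → ℝ)) (θα : (Fin N → ℝ) → (Fin N → ℝ) →L[ℝ] ℝ)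
    (x : Fin N → ℝ) :
    contrForm K ω X θα x =
      contrOfMatrix K ω X x (Matrix.of fun i j => dForm θα x (X i x) (X j x)) :=
  rfl

section Frame

open scoped Matrix

variable {N K : ℕ} {ω : Fin K → (Fin N → ℝ) → (Fin N → ℝ) →L[ℝ] ℝ}
  {X : Fin K → (Fin N → ℝ) → (Fin N → ℝ)} {x : Fin N → ℝ}

theorem wedgeEval_comp_ne_zero_iff (hdual : ∀ i j, ω i x (X j x) = if i = j then 1 else 0)
    (σ : Fin K → Fin K) :
    wedgeEval K ω x (fun b => X (σ b) x) ≠ 0 ↔ Function.Injective σ := by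
  have hone : (Matrix.of fun i j => ω i x (X j x)) = 1 := by
    ext i j
    simp [hdual, Matrix.one_apply]
  rw [← Matrix.det_submatrix_id_ne_zero_iff (M := Matrix.of fun i j => ω i x (X j x))
    (by simp [hone]), wedgeEval]
  rfl

theorem ins2_add_two {k : ℕ} (a b : Fin N → ℝ) (v : Fin k → Fin N → ℝ) :
    ins2 (k + 2) a b v = Fin.cons a (Fin.cons b v) := by
  ext t : 1
  refine Fin.cases rfl (fun t => Fin.cases rfl (fun t => ?_) t) t
  simp [ins2]

theorem exists_contrOfMatrix_apply_eq_mul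
    (hdual : ∀ i j, ω i x (X j x) = if i = j then 1 else 0) {i j : Fin K} (hij : i < j) :
    ∃ v, ∃ s ≠ 0, ∀ B, contrOfMatrix K ω X x B v = B i j * s := by
  obtain ⟨k, rfl⟩ : ∃ k, K = k + 2 :=
    ⟨K - 2, by have := j.isLt; have : (i : ℕ) < j := hij; omega⟩
  have hcard : ({i, j}ᶜ : Finset (Fin (k + 2))).card = k := by
    rw [Finset.card_compl, Finset.card_pair hij.ne, Fintype.card_fin, Nat.add_sub_cancel]
  set e := ({i, j}ᶜ : Finset (Fin (k + 2))).orderEmbOfFin hcard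
  set σ : Fin (k + 2) → Fin (k + 2) → Fin (k + 2) → Fin (k + 2) :=
    fun i' j' => Fin.cons i' (Fin.cons j' e : Fin (k + 1) → Fin (k + 2))
  have hins : ∀ i' j', ins2 (k + 2) (X i' x) (X j' x) (fun t => X (e t) x) =
      fun b => X (σ i' j' b) x := by
    intro i' j'
    rw [ins2_add_two]
    change _ = (fun c => X c x) ∘ σ i' j'
    simp only [σ, Fin.comp_cons]
    rfl
  have hinj : ∀ i' j', Function.Injective (σ i' j')
      ↔ i' ≠ j' ∧ (i' = i ∨ i' = j) ∧ (j' = i ∨ j' = j) := by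
    intro i' j'
    simp only [σ, Fin.cons_injective_iff, Fin.range_cons, e, Finset.range_orderEmbOfFin,
      e.injective, and_true, Set.mem_insert_iff, Finset.coe_compl, Set.mem_compl_iff,
      Finset.mem_coe, Finset.mem_insert, Finset.mem_singleton]
    tauto
  refine ⟨fun t => X (e t) x,
    wedgeEval (k + 2) ω x (ins2 (k + 2) (X i x) (X j x) fun t => X (e t) x), ?_, fun B => ?_⟩
  · rw [hins, wedgeEval_comp_ne_zero_iff hdual, hinj]
    simp [hij.ne]
  · simp only [contrOfMatrix, LinearMap.coe_mk, AddHom.coe_mk]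
    rw [← Fintype.sum_prod_type', Fintype.sum_eq_single (i, j) ?_]
    · exact if_pos hij
    rintro ⟨i', j'⟩ hp
    split_ifs with hlt
    · rw [hins, mul_eq_zero]
      right
      by_contra hne
      obtain ⟨hne', hi', hj'⟩ := (hinj i' j').1 ((wedgeEval_comp_ne_zero_iff hdual _).1 hne)
      rcases hi' with rfl | rfl <;> rcases hj' with rfl | rfl
      all_goals first | exact hne' rfl | exact hp rfl | exact absurd hij (not_lt.2 hlt.le)
    · rfl

theorem contrOfMatrix_eq_zero_iff (hdual : ∀ i j, ω i x (X j x) = if i = j then 1 else 0)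
    {B : Matrix (Fin K) (Fin K) ℝ} (hB : Bᵀ = -B) : contrOfMatrix K ω X x B = 0 ↔ B = 0 := by
  refine ⟨fun h0 => ?_, fun h => by rw [h, map_zero]⟩
  have hskew : ∀ i j, B j i = -B i j := fun i j => congrFun (congrFun hB i) j
  have hupper : ∀ i j, i < j → B i j = 0 := by
    intro i j hij
    obtain ⟨v, s, hs, hv⟩ := exists_contrOfMatrix_apply_eq_mul hdual hij
    have := congrFun h0 v
    rw [hv] at this
    exact (mul_eq_zero.1 this).resolve_right hs
  ext i j
  rw [Matrix.zero_apply]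
  rcases lt_trichotomy i j with hij | rfl | hji
  · exact hupper i j hij
  · linarith [hskew i i]
  · rw [hskew j i, hupper j i hji, neg_zero]

theorem linearIndependent_contrOfMatrix_iff {ι : Type*} [Fintype ι]
    (hdual : ∀ i j, ω i x (X j x) = if i = j then 1 else 0)
    {B : ι → Matrix (Fin K) (Fin K) ℝ} (hB : ∀ α, (B α)ᵀ = -B α) :
    LinearIndependent ℝ (fun α => contrOfMatrix K ω X x (B α)) ↔ LinearIndependent ℝ B := by
  simp only [Fintype.linearIndependent_iff, ← map_smul, ← map_sum]
  refine forall_congr' fun c => imp_congr_left (contrOfMatrix_eq_zero_iff hdual ?_)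
  simp [Matrix.transpose_sum, hB]

end Frame

theorem LieSpan.span_eval_eq_top {N : ℕ} {ι κ : Type*} [Fintype κ] {Ω : Set (Fin N → ℝ)}
    {X : ι → (Fin N → ℝ) → (Fin N → ℝ)} {T : κ → (Fin N → ℝ) → (Fin N → ℝ)} {x : Fin N → ℝ}
    (hframe : Submodule.span ℝ (Set.range (Sum.elim (fun i => X i x) (fun β => T β x))) = ⊤)
    {W : ι → ι → κ → ℝ}
    (hW : ∀ i j, lieBr (X i) (X j) x - ∑ α, W i j α • T α x ∈
      Submodule.span ℝ (Set.range fun k => X k x))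
    (hLI : LinearIndependent ℝ fun α => Matrix.of fun i j => W i j α) :
    Submodule.span ℝ {v | ∃ Z, LieSpan Ω (Set.range X) Z ∧ Z x = v} = ⊤ := by
  set P := Submodule.span ℝ {v | ∃ Z, LieSpan Ω (Set.range X) Z ∧ Z x = v}
  have hXP : ∀ k, X k x ∈ P := fun k =>
    Submodule.subset_span ⟨X k, LieSpan.base _ ⟨k, rfl⟩, rfl⟩
  have hbracket : ∀ i j, lieBr (X i) (X j) x ∈ P := fun i j =>
    Submodule.subset_span ⟨_, .bracket _ _ (.base _ ⟨i, rfl⟩) (.base _ ⟨j, rfl⟩), rfl⟩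
  have hspanX : Submodule.span ℝ (Set.range fun k => X k x) ≤ P :=
    Submodule.span_le.2 (Set.range_subset_iff.2 hXP)
  have hTP : ∀ β, T β x ∈ P := Submodule.mem_of_linearIndependent_of_sum_smul_mem hLI
    fun i j => by simpa using P.sub_mem (hbracket i j) (hspanX (hW i j))
  rw [eq_top_iff, ← hframe, Submodule.span_le, Set.range_subset_iff]
  rintro (i | β)
  exacts [hXP i, hTP β]

theorem lie_span_full_rank_of_independent_torsion_general
    (m l : ℕ)
    (Ω : Set (Fin (m + 1) → ℝ)) (hΩopen : IsOpen Ω)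
    (ω : Fin (m + 1 - l) → ((Fin (m + 1) → ℝ) → ((Fin (m + 1) → ℝ) →L[ℝ] ℝ)))
    (θ : Fin l → ((Fin (m + 1) → ℝ) → ((Fin (m + 1) → ℝ) →L[ℝ] ℝ)))
    (X : Fin (m + 1 - l) → ((Fin (m + 1) → ℝ) → (Fin (m + 1) → ℝ)))
    (T : Fin l → ((Fin (m + 1) → ℝ) → (Fin (m + 1) → ℝ)))
    (hθ : ∀ α, ContDiffOn ℝ (⊤ : ℕ∞) (θ α) Ω)
    (hX : ∀ i, ContDiffOn ℝ (⊤ : ℕ∞) (X i) Ω)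
    -- duality of the frame and the coframe
    (hdual₁ : ∀ x ∈ Ω, ∀ i j, ω i x (X j x) = if i = j then 1 else 0)
    (hdual₃ : ∀ x ∈ Ω, ∀ α j, θ α x (X j x) = 0)
    (hdual₄ : ∀ x ∈ Ω, ∀ α β, θ α x (T β x) = if α = β then 1 else 0)
    -- `{X, T}` is a frame of `ℝ^{m+1}` at every point
    (hframe : ∀ x ∈ Ω, Submodule.span ℝ
      (Set.range (Sum.elim (fun i => X i x) (fun β => T β x))) = ⊤)
    -- the structure functions `W_{ij}^α`
    (W : Fin (m + 1 - l) → Fin (m + 1 - l) → Fin l → (Fin (m + 1) → ℝ) → ℝ)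
    (hW : ∀ x ∈ Ω, ∀ i j,
      lieBr (X i) (X j) x - (∑ α, W i j α x • T α x) ∈
        Submodule.span ℝ (Set.range fun k => X k x)) :
    -- full rank of the Lie span, under pointwise linear independence of the `W^α`
    ((∀ x ∈ Ω, LinearIndependent ℝ
        (fun α : Fin l => Matrix.of fun i j => W i j α x)) →
      ∀ x ∈ Ω,
        Submodule.span ℝ {v | ∃ Z, LieSpan Ω (Set.range X) Z ∧ Z x = v} = ⊤) ∧
    -- equivalence of the two linear-independence conditions, at every point
    (∀ x ∈ Ω,
      (LinearIndependent ℝ (fun α : Fin l => Matrix.of fun i j => W i j α x) ↔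
       LinearIndependent ℝ (fun α : Fin l => contrForm (m + 1 - l) ω X (θ α) x))) := by
  refine ⟨fun hLI x hx => LieSpan.span_eval_eq_top (hframe x hx) (hW x hx) (hLI x hx),
    fun x hx => ?_⟩
  have hx' := hΩopen.mem_nhds hx
  have hθX : ∀ α i, ∀ᶠ y in nhds x, θ α y (X i y) = 0 := fun α i =>
    Filter.eventually_of_mem hx' fun y hy => hdual₃ y hy α i
  have hXdiff : ∀ i, DifferentiableAt ℝ (X i) x := fun i =>
    ((hX i).contDiffAt hx').differentiableAt (by simp)
  have hθdiff : ∀ α, DifferentiableAt ℝ (θ α) x := fun α =>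
    ((hθ α).contDiffAt hx').differentiableAt (by simp)
  set D := fun α => Matrix.of fun i j => dForm (θ α) x (X i x) (X j x)
  have hD : D = -fun α => Matrix.of fun i j => W i j α x := by
    ext α i j
    change dForm (θ α) x (X i x) (X j x) = -W i j α x
    rw [dForm_eq_neg_apply_lieBr (hθdiff α) (hXdiff i) (hXdiff j) (hθX α i) (hθX α j)]
    exact congrArg Neg.neg (LinearMap.apply_eq_coeff_of_sub_mem_span (f := (θ α x : _ →ₗ[ℝ] ℝ))
      (hdual₃ x hx α) (hdual₄ x hx α) (hW x hx i j))
  have hDskew : ∀ α, (D α).transpose = -D α := fun α => by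
    ext i j
    simp [D, dForm]
  simp only [contrForm_eq_contrOfMatrix]
  rw [linearIndependent_contrOfMatrix_iff (hdual₁ x hx) hDskew, hD, linearIndependent_neg_iff]

/-- Proposition 4.2. Given a smooth frame
`{X₁,...,X_{m+1−l}, T₁,...,T_l}` of `ℝ^{m+1}` on `Ω` dual to the coframe
`{ω¹,...,ω^{m+1−l}, θ¹,...,θ^l}`, with `[X_i,X_j] = Σ_α W_{ij}^α T_α mod (X)`,
if `(m+1−l)(m−l)/2 ≥ l` and the matrices `(W_{ij}^α)`, `α = 1,...,l`, are
linearly independent at every point, then `£(X₁,...,X_{m+1−l})` has full rank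
`m+1` everywhere; moreover at every point the matrices are linearly independent
iff the contracted forms `dθ^α ⌟ (ω¹ ∧ ... ∧ ω^{m+1−l})` are. -/
theorem lie_span_full_rank_of_independent_torsion
    (m l : ℕ) (hl : l ≤ m)
    (Ω : Set (Fin (m + 1) → ℝ)) (hΩopen : IsOpen Ω)
    (ω : Fin (m + 1 - l) → ((Fin (m + 1) → ℝ) → ((Fin (m + 1) → ℝ) →L[ℝ] ℝ)))
    (θ : Fin l → ((Fin (m + 1) → ℝ) → ((Fin (m + 1) → ℝ) →L[ℝ] ℝ)))
    (X : Fin (m + 1 - l) → ((Fin (m + 1) → ℝ) → (Fin (m + 1) → ℝ)))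
    (T : Fin l → ((Fin (m + 1) → ℝ) → (Fin (m + 1) → ℝ)))
    (hω : ∀ i, ContDiffOn ℝ (⊤ : ℕ∞) (ω i) Ω)
    (hθ : ∀ α, ContDiffOn ℝ (⊤ : ℕ∞) (θ α) Ω)
    (hX : ∀ i, ContDiffOn ℝ (⊤ : ℕ∞) (X i) Ω)
    (hT : ∀ α, ContDiffOn ℝ (⊤ : ℕ∞) (T α) Ω)
    -- duality of the frame and the coframe
    (hdual₁ : ∀ x ∈ Ω, ∀ i j, ω i x (X j x) = if i = j then 1 else 0)
    (hdual₂ : ∀ x ∈ Ω, ∀ i β, ω i x (T β x) = 0)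
    (hdual₃ : ∀ x ∈ Ω, ∀ α j, θ α x (X j x) = 0)
    (hdual₄ : ∀ x ∈ Ω, ∀ α β, θ α x (T β x) = if α = β then 1 else 0)
    -- `{X, T}` is a frame of `ℝ^{m+1}` at every point
    (hframe : ∀ x ∈ Ω, Submodule.span ℝ
      (Set.range (Sum.elim (fun i => X i x) (fun β => T β x))) = ⊤)
    -- the structure functions `W_{ij}^α`
    (W : Fin (m + 1 - l) → Fin (m + 1 - l) → Fin l → (Fin (m + 1) → ℝ) → ℝ)
    (hWsmooth : ∀ i j α, ContDiffOn ℝ (⊤ : ℕ∞) (W i j α) Ω)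
    (hW : ∀ x ∈ Ω, ∀ i j,
      lieBr (X i) (X j) x - (∑ α, W i j α x • T α x) ∈
        Submodule.span ℝ (Set.range fun k => X k x))
    -- the dimension count `(m+1−l)(m−l)/2 ≥ l`
    (hineq : l ≤ (m + 1 - l) * (m - l) / 2) :
    -- full rank of the Lie span, under pointwise linear independence of the `W^α`
    ((∀ x ∈ Ω, LinearIndependent ℝ
        (fun α : Fin l => Matrix.of fun i j => W i j α x)) →
      ∀ x ∈ Ω,
        Submodule.span ℝ {v | ∃ Z, LieSpan Ω (Set.range X) Z ∧ Z x = v} = ⊤) ∧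
    -- equivalence of the two linear-independence conditions, at every point
    (∀ x ∈ Ω,
      (LinearIndependent ℝ (fun α : Fin l => Matrix.of fun i j => W i j α x) ↔
       LinearIndependent ℝ (fun α : Fin l => contrForm (m + 1 - l) ω X (θ α) x))) :=
  lie_span_full_rank_of_independent_torsion_general m l Ω hΩopen ω θ X T hθ hX hdual₁ hdual₃ hdual₄
    hframe W hW
end
end

section
/- Let n ≥ 1 and use coordinates (x₁,...,x_n, y₁,...,y_n, z) on ℝ^{2n+1}. Define the vector fields ê_j := ∂_{x_j} + y_j ∂_z and ê_{n+j} := ∂_{y_j} − x_j ∂_z for 1 ≤ j ≤ n, and for a C² function φ set ∇_bφ := (ê₁φ,...,ê_{2n}φ) with |∇_bφ| its Euclidean length. Let r := (Σ_{j=1}^n (x_j² + y_j²))^{1/2}, ρ := (r⁴ + 4z²)^{1/4}, and wherever |∇_bφ| ≠ 0 define the Heisenberg-cylinder mean curvature H_φ := ρ·Σ_{I=1}^{2n} ê_I(ê_Iφ/|∇_bφ|) − (2n+1)·Σ_{I=1}^{2n} (ê_Iφ/|∇_bφ|)·ê_Iρ. Then for the function φ := c r² − z with c ∈ ℝ a constant,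 at every point of the hypersurface {z = c r²} with r ≠ 0 one has H_φ = 2(2n−1)c/(1+4c²)^{1/4}. -/
open Set Finset

noncomputable section

/-- The `k`-th coordinate of a point of `ℝ^N` (zero if `k ≥ N`). -/
def cv (N k : ℕ) (x : Fin N → ℝ) : ℝ := if h : k < N then x ⟨k, h⟩ else 0

/-! Coordinates on `ℝ^{2n+1}`: the entries of index `0,...,n−1` are
`x₁,...,x_n`, those of index `n,...,2n−1` are `y₁,...,y_n`, and the entry of
index `2n` is `z`. -/

/-- The left-invariant horizontal vector fields of the Heisenberg group:
`ê_I = ∂_{x_I} + y_I ∂_z` (`I < n`) and `ê_{n+j} = ∂_{y_j} − x_j ∂_z`. -/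
def hV (n I : ℕ) : (Fin (2 * n + 1) → ℝ) → (Fin (2 * n + 1) → ℝ) :=
  fun x =>
    if I < n then ee (2 * n + 1) I + cv (2 * n + 1) (n + I) x • ee (2 * n + 1) (2 * n)
    else ee (2 * n + 1) I - cv (2 * n + 1) (I - n) x • ee (2 * n + 1) (2 * n)

/-- `|∇_bφ|`, the length of the horizontal gradient. -/
def nb (n : ℕ) (φ : (Fin (2 * n + 1) → ℝ) → ℝ) (x : Fin (2 * n + 1) → ℝ) : ℝ :=
  Real.sqrt (∑ I : Fin (2 * n), (vApp (hV n (I : ℕ)) φ x) ^ 2)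

/-- `r = (Σ (x_j² + y_j²))^{1/2}`. -/
def rad (n : ℕ) (x : Fin (2 * n + 1) → ℝ) : ℝ :=
  Real.sqrt (∑ I : Fin (2 * n), (cv (2 * n + 1) (I : ℕ) x) ^ 2)

/-- The Heisenberg distance `ρ = (r⁴ + 4z²)^{1/4}`. -/
def rho (n : ℕ) (x : Fin (2 * n + 1) → ℝ) : ℝ :=
  ((∑ I : Fin (2 * n), (cv (2 * n + 1) (I : ℕ) x) ^ 2) ^ 2
      + 4 * (cv (2 * n + 1) (2 * n) x) ^ 2) ^ ((1 : ℝ) / 4)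

/-- The Heisenberg-cylinder horizontal mean curvature
`H_φ = ρ·Σ_I ê_I(ê_Iφ/|∇_bφ|) − (2n+1)·Σ_I (ê_Iφ/|∇_bφ|)·ê_Iρ`. -/
def Hcyl (n : ℕ) (φ : (Fin (2 * n + 1) → ℝ) → ℝ) (x : Fin (2 * n + 1) → ℝ) : ℝ :=
  rho n x * (∑ I : Fin (2 * n), vApp (hV n (I : ℕ)) (fun y => vApp (hV n (I : ℕ)) φ y / nb n φ y) x)
    - (2 * n + 1) * (∑ I : Fin (2 * n), (vApp (hV n (I : ℕ)) φ x / nb n φ x) * vApp (hV n (I : ℕ)) (rho n) x)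

/-!
Write `S = r²` and `ê_I = ∂_I + w_I ∂_z`, so that `ê_Iφ = 2c x_I − w_I` for `φ = c r² − z`.
The coefficients `w = (y, −x)` are orthogonal to `(x, y)` and have length `r`; hence
`|∇_bφ| = √(1 + 4c²) r`. Since `ê_I(ê_Iφ) = 2c` and `ê_I r = x_I / r`, the horizontal
divergence `Σ_I ê_I(ê_Iφ / |∇_bφ|)` equals `(4nc − 2c) / (√(1 + 4c²) r)`. The second term of
`H_φ` is a multiple of `Σ_I ê_Iφ · ê_I(ρ⁴) = 8cS² − 8zS`, which vanishes on `z = cS`, and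
there `ρ = r (1 + 4c²)^{1/4}`.
-/

namespace HeisenbergCylinder

theorem sum_fin_two_mul {M : Type*} [AddCommMonoid M] {n : ℕ} (f : Fin (2 * n) → M) :
    ∑ I, f I = ∑ i : Fin n, f ⟨i, by omega⟩ + ∑ i : Fin n, f ⟨n + i, by omega⟩ := by
  rw [← Fin.sum_congr' f (two_mul n).symm, Fin.sum_univ_add]
  rfl

theorem sqrt_eq_rpow_one_fourth_sq {a : ℝ} (ha : 0 ≤ a) : √a = (a ^ (1 / 4 : ℝ)) ^ 2 := by
  rw [Real.sqrt_eq_rpow, ← Real.rpow_natCast, ← Real.rpow_mul ha]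
  norm_num

section DirectionalDerivative

variable {N : ℕ} {X : (Fin N → ℝ) → Fin N → ℝ} {f g : (Fin N → ℝ) → ℝ} {x : Fin N → ℝ}

theorem vApp_eq_of_hasFDerivAt {L : (Fin N → ℝ) →L[ℝ] ℝ} (h : HasFDerivAt f L x) :
    vApp X f x = L (X x) := by
  rw [vApp, h.fderiv]

theorem vApp_apply (i : Fin N) : vApp X (fun y => y i) x = X x i :=
  vApp_eq_of_hasFDerivAt (hasFDerivAt_apply i x)

theorem vApp_const_mul (hf : DifferentiableAt ℝ f x) (a : ℝ) :
    vApp X (fun y => a * f y) x = a * vApp X f x :=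
  vApp_eq_of_hasFDerivAt (hf.hasFDerivAt.const_mul a)

theorem vApp_add (hf : DifferentiableAt ℝ f x) (hg : DifferentiableAt ℝ g x) :
    vApp X (fun y => f y + g y) x = vApp X f x + vApp X g x :=
  vApp_eq_of_hasFDerivAt (hf.hasFDerivAt.add hg.hasFDerivAt)

theorem vApp_sub (hf : DifferentiableAt ℝ f x) (hg : DifferentiableAt ℝ g x) :
    vApp X (fun y => f y - g y) x = vApp X f x - vApp X g x :=
  vApp_eq_of_hasFDerivAt (hf.hasFDerivAt.sub hg.hasFDerivAt)

theorem vApp_mul (hf : DifferentiableAt ℝ f x) (hg : DifferentiableAt ℝ g x) :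
    vApp X (fun y => f y * g y) x = vApp X f x * g x + f x * vApp X g x := by
  rw [vApp_eq_of_hasFDerivAt (hf.hasFDerivAt.fun_mul hg.hasFDerivAt), vApp, vApp]
  simp only [add_apply, smul_apply, smul_eq_mul]
  ring

theorem vApp_sum {ι : Type*} (s : Finset ι) {F : ι → (Fin N → ℝ) → ℝ}
    (hF : ∀ i ∈ s, DifferentiableAt ℝ (F i) x) :
    vApp X (fun y => ∑ i ∈ s, F i y) x = ∑ i ∈ s, vApp X (F i) x := by
  rw [vApp_eq_of_hasFDerivAt (HasFDerivAt.fun_sum fun i hi => (hF i hi).hasFDerivAt)]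
  simp only [FunLike.coe_sum, Finset.sum_apply, vApp]

theorem vApp_comp {h : ℝ → ℝ} {h' : ℝ} (hh : HasDerivAt h h' (f x))
    (hf : DifferentiableAt ℝ f x) : vApp X (fun y => h (f y)) x = h' * vApp X f x := by
  rw [vApp_eq_of_hasFDerivAt (f := fun y => h (f y)) (hh.comp_hasFDerivAt x hf.hasFDerivAt), vApp]
  simp only [smul_apply, smul_eq_mul]

theorem vApp_div (hf : DifferentiableAt ℝ f x) (hg : DifferentiableAt ℝ g x) (hgx : g x ≠ 0) :
    vApp X (fun y => f y / g y) x = (vApp X f x * g x - f x * vApp X g x) / g x ^ 2 := by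
  simp only [div_eq_mul_inv]
  rw [vApp_mul (g := fun y => (g y)⁻¹) hf (hg.inv hgx), vApp_comp (hasDerivAt_inv hgx) hg]
  field_simp
  ring

end DirectionalDerivative

theorem cv_of_lt {N k : ℕ} (h : k < N) (x : Fin N → ℝ) : cv N k x = x ⟨k, h⟩ := dif_pos h

variable (n : ℕ)

def sqRad (x : Fin (2 * n + 1) → ℝ) : ℝ := ∑ I : Fin (2 * n), x I.castSucc ^ 2

def conjIndex (I : Fin (2 * n)) : Fin (2 * n) :=
  if h : (I : ℕ) < n then ⟨n + I, by omega⟩ else ⟨I - n, by omega⟩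

def conjSign (I : Fin (2 * n)) : ℝ := if (I : ℕ) < n then 1 else -1

/-- The `∂_z`-coefficient of `ê_I`: `y_j` for `I = j` and `−x_j` for `I = n + j`. -/
def zCoeff (I : Fin (2 * n)) (x : Fin (2 * n + 1) → ℝ) : ℝ :=
  conjSign n I * x (conjIndex n I).castSucc

def paraboloid (c : ℝ) (x : Fin (2 * n + 1) → ℝ) : ℝ := c * sqRad n x - x (Fin.last (2 * n))

variable {n}

theorem sum_cv_sq_eq_sqRad (x : Fin (2 * n + 1) → ℝ) :
    ∑ I : Fin (2 * n), cv (2 * n + 1) I x ^ 2 = sqRad n x :=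
  Finset.sum_congr rfl fun I _ => by rw [cv_of_lt (by omega)]; rfl

theorem cv_two_mul (x : Fin (2 * n + 1) → ℝ) : cv (2 * n + 1) (2 * n) x = x (Fin.last (2 * n)) :=
  cv_of_lt (by omega) x

theorem rad_eq_sqrt_sqRad (x : Fin (2 * n + 1) → ℝ) : rad n x = √(sqRad n x) := by
  rw [rad, sum_cv_sq_eq_sqRad]

theorem rho_eq (x : Fin (2 * n + 1) → ℝ) :
    rho n x = (sqRad n x ^ 2 + 4 * x (Fin.last (2 * n)) ^ 2) ^ (1 / 4 : ℝ) := by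
  rw [rho, sum_cv_sq_eq_sqRad, cv_two_mul]

theorem sqRad_nonneg (x : Fin (2 * n + 1) → ℝ) : 0 ≤ sqRad n x :=
  Finset.sum_nonneg fun _ _ => sq_nonneg _

theorem hV_apply_castSucc (I J : Fin (2 * n)) (x : Fin (2 * n + 1) → ℝ) :
    hV n I x J.castSucc = if J = I then 1 else 0 := by
  have hJ : (J : ℕ) ≠ 2 * n := J.isLt.ne
  unfold hV
  split_ifs <;> simp_all [ee, Fin.ext_iff]

theorem hV_apply_last (I : Fin (2 * n)) (x : Fin (2 * n + 1) → ℝ) :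
    hV n I x (Fin.last (2 * n)) = zCoeff n I x := by
  have hI : 2 * n ≠ (I : ℕ) := I.isLt.ne'
  unfold hV zCoeff conjSign conjIndex
  split_ifs
  · simp [ee, hI, cv_of_lt (show n + (I : ℕ) < 2 * n + 1 by omega)]
  · simp [ee, hI, cv_of_lt (show (I : ℕ) - n < 2 * n + 1 by omega)]

theorem zCoeff_xIndex (i : Fin n) (x : Fin (2 * n + 1) → ℝ) :
    zCoeff n ⟨i, by omega⟩ x = x ⟨n + i, by omega⟩ := by
  simp [zCoeff, conjSign, conjIndex]

theorem zCoeff_yIndex (i : Fin n) (x : Fin (2 * n + 1) → ℝ) :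
    zCoeff n ⟨n + i, by omega⟩ x = -x ⟨i, by omega⟩ := by
  simp [zCoeff, conjSign, conjIndex]

theorem sum_zCoeff_mul_self (x : Fin (2 * n + 1) → ℝ) :
    ∑ I : Fin (2 * n), zCoeff n I x * x I.castSucc = 0 := by
  rw [sum_fin_two_mul]
  simp only [zCoeff_xIndex, zCoeff_yIndex, Fin.castSucc_mk, ← Finset.sum_add_distrib]
  exact Finset.sum_eq_zero fun i _ => by ring

theorem sum_zCoeff_sq (x : Fin (2 * n + 1) → ℝ) :
    ∑ I : Fin (2 * n), zCoeff n I x ^ 2 = sqRad n x := by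
  rw [sum_fin_two_mul, sqRad, sum_fin_two_mul]
  simp only [zCoeff_xIndex, zCoeff_yIndex, Fin.castSucc_mk, neg_sq]
  exact add_comm _ _

@[fun_prop]
theorem differentiable_sqRad : Differentiable ℝ (sqRad n) := by
  unfold sqRad
  fun_prop

@[fun_prop]
theorem differentiable_zCoeff (I : Fin (2 * n)) : Differentiable ℝ (zCoeff n I) := by
  unfold zCoeff
  fun_prop

variable {x : Fin (2 * n + 1) → ℝ}

theorem vApp_hV_apply_castSucc (I J : Fin (2 * n)) :
    vApp (hV n I) (fun y => y J.castSucc) x = if J = I then 1 else 0 := by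
  rw [vApp_apply, hV_apply_castSucc]

theorem vApp_hV_apply_last (I : Fin (2 * n)) :
    vApp (hV n I) (fun y => y (Fin.last (2 * n))) x = zCoeff n I x := by
  rw [vApp_apply, hV_apply_last]

theorem vApp_hV_sqRad (I : Fin (2 * n)) : vApp (hV n I) (sqRad n) x = 2 * x I.castSucc := by
  unfold sqRad
  rw [vApp_sum _ fun J _ => by fun_prop]
  simp only [vApp_comp (hasDerivAt_pow 2 _) (differentiableAt_apply _ x), vApp_hV_apply_castSucc]
  simp

theorem vApp_hV_zCoeff (I : Fin (2 * n)) : vApp (hV n I) (zCoeff n I) x = 0 := by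
  have hconj : conjIndex n I ≠ I := by
    unfold conjIndex
    split_ifs <;> simp [Fin.ext_iff] <;> omega
  unfold zCoeff
  rw [vApp_const_mul (differentiableAt_apply _ x), vApp_hV_apply_castSucc, if_neg hconj, mul_zero]

theorem vApp_hV_paraboloid (c : ℝ) (I : Fin (2 * n)) :
    vApp (hV n I) (paraboloid n c) x = 2 * c * x I.castSucc - zCoeff n I x := by
  unfold paraboloid
  rw [vApp_sub (by fun_prop) (by fun_prop), vApp_const_mul (by fun_prop), vApp_hV_sqRad,
    vApp_hV_apply_last]
  ring

theorem sum_vApp_hV_paraboloid_mul_self (c : ℝ) :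
    ∑ I : Fin (2 * n), vApp (hV n I) (paraboloid n c) x * x I.castSucc = 2 * c * sqRad n x := by
  simp only [vApp_hV_paraboloid]
  calc _ = 2 * c * sqRad n x - ∑ I : Fin (2 * n), zCoeff n I x * x I.castSucc := by
        rw [sqRad, Finset.mul_sum, ← Finset.sum_sub_distrib]
        exact Finset.sum_congr rfl fun I _ => by ring
    _ = 2 * c * sqRad n x := by rw [sum_zCoeff_mul_self, sub_zero]

theorem sum_vApp_hV_paraboloid_mul_zCoeff (c : ℝ) :
    ∑ I : Fin (2 * n), vApp (hV n I) (paraboloid n c) x * zCoeff n I x = -sqRad n x := by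
  simp only [vApp_hV_paraboloid]
  calc _ = 2 * c * ∑ I : Fin (2 * n), zCoeff n I x * x I.castSucc
        - ∑ I : Fin (2 * n), zCoeff n I x ^ 2 := by
        rw [Finset.mul_sum, ← Finset.sum_sub_distrib]
        exact Finset.sum_congr rfl fun I _ => by ring
    _ = -sqRad n x := by rw [sum_zCoeff_mul_self, sum_zCoeff_sq]; ring

theorem sum_vApp_hV_paraboloid_sq (c : ℝ) :
    ∑ I : Fin (2 * n), vApp (hV n I) (paraboloid n c) x ^ 2 = (1 + 4 * c ^ 2) * sqRad n x :=
  calc _ = 2 * c * ∑ I : Fin (2 * n), vApp (hV n I) (paraboloid n c) x * x I.castSucc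
        - ∑ I : Fin (2 * n), vApp (hV n I) (paraboloid n c) x * zCoeff n I x := by
        rw [Finset.mul_sum, ← Finset.sum_sub_distrib]
        exact Finset.sum_congr rfl fun I _ => by rw [vApp_hV_paraboloid]; ring
    _ = (1 + 4 * c ^ 2) * sqRad n x := by
        rw [sum_vApp_hV_paraboloid_mul_self, sum_vApp_hV_paraboloid_mul_zCoeff]; ring

theorem nb_paraboloid (c : ℝ) : nb n (paraboloid n c) x = √(1 + 4 * c ^ 2) * √(sqRad n x) := by
  rw [nb, sum_vApp_hV_paraboloid_sq, Real.sqrt_mul (by positivity)]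

theorem vApp_hV_sqrt_sqRad (hS : sqRad n x ≠ 0) (I : Fin (2 * n)) :
    vApp (hV n I) (fun y => √(sqRad n y)) x = x I.castSucc / √(sqRad n x) := by
  rw [vApp_comp (Real.hasDerivAt_sqrt hS) (by fun_prop), vApp_hV_sqRad]
  field_simp

theorem vApp_hV_div_nb_paraboloid (c : ℝ) (hS : sqRad n x ≠ 0) (I : Fin (2 * n)) :
    vApp (hV n I) (fun y => vApp (hV n I) (paraboloid n c) y / nb n (paraboloid n c) y) x
      = (2 * c * sqRad n x - vApp (hV n I) (paraboloid n c) x * x I.castSucc)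
          / (√(1 + 4 * c ^ 2) * √(sqRad n x) ^ 3) := by
  have hK : √(1 + 4 * c ^ 2) ≠ 0 := (Real.sqrt_pos.2 (by positivity)).ne'
  have hr : √(sqRad n x) ≠ 0 := Real.sqrt_ne_zero'.2 ((sqRad_nonneg x).lt_of_ne' hS)
  simp only [vApp_hV_paraboloid, nb_paraboloid]
  rw [vApp_div (by fun_prop) (by fun_prop (disch := exact hS)) (mul_ne_zero hK hr),
    vApp_sub (by fun_prop) (by fun_prop), vApp_const_mul (by fun_prop),
    vApp_const_mul (by fun_prop (disch := exact hS)), vApp_hV_apply_castSucc, if_pos rfl,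
    vApp_hV_zCoeff, vApp_hV_sqrt_sqRad hS]
  field_simp
  rw [Real.sq_sqrt (sqRad_nonneg x)]
  ring

theorem sum_vApp_hV_div_nb_paraboloid (c : ℝ) (hS : sqRad n x ≠ 0) :
    ∑ I : Fin (2 * n),
        vApp (hV n I) (fun y => vApp (hV n I) (paraboloid n c) y / nb n (paraboloid n c) y) x
      = 2 * (2 * n - 1) * c / (√(1 + 4 * c ^ 2) * √(sqRad n x)) := by
  have hK : √(1 + 4 * c ^ 2) ≠ 0 := (Real.sqrt_pos.2 (by positivity)).ne'
  have hr : √(sqRad n x) ≠ 0 := Real.sqrt_ne_zero'.2 ((sqRad_nonneg x).lt_of_ne' hS)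
  simp only [vApp_hV_div_nb_paraboloid c hS]
  rw [← Finset.sum_div, Finset.sum_sub_distrib, sum_vApp_hV_paraboloid_mul_self, Finset.sum_const,
    Finset.card_univ, Fintype.card_fin, nsmul_eq_mul]
  field_simp
  rw [Real.sq_sqrt (sqRad_nonneg x)]
  push_cast
  ring

theorem vApp_hV_rho (hS : sqRad n x ≠ 0) (I : Fin (2 * n)) :
    vApp (hV n I) (rho n) x
      = 1 / 4 * (sqRad n x ^ 2 + 4 * x (Fin.last (2 * n)) ^ 2) ^ (1 / 4 - 1 : ℝ)
          * (4 * sqRad n x * x I.castSucc + 8 * x (Fin.last (2 * n)) * zCoeff n I x) := by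
  have hB : sqRad n x ^ 2 + 4 * x (Fin.last (2 * n)) ^ 2 ≠ 0 := by positivity
  rw [funext rho_eq, vApp_comp (Real.hasDerivAt_rpow_const (Or.inl hB)) (by fun_prop),
    vApp_add (by fun_prop) (by fun_prop), vApp_comp (hasDerivAt_pow 2 _) (by fun_prop),
    vApp_const_mul (by fun_prop), vApp_comp (hasDerivAt_pow 2 _) (by fun_prop),
    vApp_hV_sqRad, vApp_hV_apply_last]
  push_cast
  ring

theorem sum_div_nb_mul_vApp_hV_rho_eq_zero (c : ℝ) (hS : sqRad n x ≠ 0)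
    (hz : x (Fin.last (2 * n)) = c * sqRad n x) :
    ∑ I : Fin (2 * n), vApp (hV n I) (paraboloid n c) x / nb n (paraboloid n c) x
      * vApp (hV n I) (rho n) x = 0 := by
  set a := 1 / 4 * (sqRad n x ^ 2 + 4 * x (Fin.last (2 * n)) ^ 2) ^ (1 / 4 - 1 : ℝ)
    / nb n (paraboloid n c) x
  calc _ = a * (4 * sqRad n x * ∑ I : Fin (2 * n), vApp (hV n I) (paraboloid n c) x * x I.castSucc
        + 8 * x (Fin.last (2 * n))
          * ∑ I : Fin (2 * n), vApp (hV n I) (paraboloid n c) x * zCoeff n I x) := by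
        simp only [vApp_hV_rho hS, Finset.mul_sum, ← Finset.sum_add_distrib]
        exact Finset.sum_congr rfl fun I _ => by ring
    _ = 0 := by
        rw [sum_vApp_hV_paraboloid_mul_self, sum_vApp_hV_paraboloid_mul_zCoeff, hz]
        ring

theorem rho_eq_of_paraboloid (c : ℝ) (hz : x (Fin.last (2 * n)) = c * sqRad n x) :
    rho n x = √(sqRad n x) * (1 + 4 * c ^ 2) ^ (1 / 4 : ℝ) := by
  have hB : sqRad n x ^ 2 + 4 * x (Fin.last (2 * n)) ^ 2
      = √(sqRad n x) ^ 4 * (1 + 4 * c ^ 2) := by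
    rw [hz]
    linear_combination -(sqRad n x + √(sqRad n x) ^ 2) * (1 + 4 * c ^ 2)
      * Real.sq_sqrt (sqRad_nonneg x)
  rw [rho_eq, hB, Real.mul_rpow (by positivity) (by positivity)]
  congr 1
  convert Real.pow_rpow_inv_natCast (Real.sqrt_nonneg (sqRad n x)) four_ne_zero using 2
  norm_num

end HeisenbergCylinder

open HeisenbergCylinder in
theorem heisenberg_cylinder_paraboloid_mean_curvature_general
    (n : ℕ) (c : ℝ) :
    ∀ x : Fin (2 * n + 1) → ℝ, rad n x ≠ 0 →
      cv (2 * n + 1) (2 * n) x = c * (∑ I : Fin (2 * n), (cv (2 * n + 1) (I : ℕ) x) ^ 2) →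
      Hcyl n (fun y => c * (∑ I : Fin (2 * n), (cv (2 * n + 1) (I : ℕ) y) ^ 2)
          - cv (2 * n + 1) (2 * n) y) x
        = 2 * (2 * n - 1) * c / (1 + 4 * c ^ 2) ^ ((1 : ℝ) / 4) := by
  intro x hr hz
  rw [cv_two_mul, sum_cv_sq_eq_sqRad] at hz
  rw [rad_eq_sqrt_sqRad] at hr
  have hS : sqRad n x ≠ 0 := fun h => hr (by rw [h, Real.sqrt_zero])
  have hφ : (fun y => c * (∑ I : Fin (2 * n), (cv (2 * n + 1) (I : ℕ) y) ^ 2)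
      - cv (2 * n + 1) (2 * n) y) = paraboloid n c := by
    ext y
    rw [sum_cv_sq_eq_sqRad, cv_two_mul, paraboloid]
  rw [hφ, Hcyl, sum_vApp_hV_div_nb_paraboloid c hS, sum_div_nb_mul_vApp_hV_rho_eq_zero c hS hz,
    rho_eq_of_paraboloid c hz, sqrt_eq_rpow_one_fourth_sq (by positivity : (0 : ℝ) ≤ 1 + 4 * c ^ 2)]
  have hT : (1 + 4 * c ^ 2) ^ (1 / 4 : ℝ) ≠ 0 := by positivity
  field_simp
  ring

/-- Proposition 6.1(a): the hypersurface `z = c r²` in the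
Heisenberg cylinder `(H_n \ {0}, ρ^{−2}Θ)` has constant horizontal (p-)mean
curvature `2(2n−1)c/(1+4c²)^{1/4}`. -/
theorem heisenberg_cylinder_paraboloid_mean_curvature
    (n : ℕ) (hn : 1 ≤ n) (c : ℝ) :
    ∀ x : Fin (2 * n + 1) → ℝ, rad n x ≠ 0 →
      cv (2 * n + 1) (2 * n) x = c * (∑ I : Fin (2 * n), (cv (2 * n + 1) (I : ℕ) x) ^ 2) →
      Hcyl n (fun y => c * (∑ I : Fin (2 * n), (cv (2 * n + 1) (I : ℕ) y) ^ 2)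
          - cv (2 * n + 1) (2 * n) y) x
        = 2 * (2 * n - 1) * c / (1 + 4 * c ^ 2) ^ ((1 : ℝ) / 4) :=
  heisenberg_cylinder_paraboloid_mean_curvature_general n c
end
end

section
/- Let n ≥ 1 and use coordinates (x₁,...,x_n, y₁,...,y_n, z) on ℝ^{2n+1}. Define ê_j := ∂_{x_j} + y_j ∂_z and ê_{n+j} := ∂_{y_j} − x_j ∂_z for 1 ≤ j ≤ n, ∇_bφ := (ê₁φ,...,ê_{2n}φ), r := (Σ_{j=1}^n (x_j² + y_j²))^{1/2}, ρ := (r⁴ + 4z²)^{1/4}, and wherever |∇_bφ| ≠ 0 set H_φ := ρ·Σ_{I=1}^{2n} ê_I(ê_Iφ/|∇_bφ|) − (2n+1)·Σ_{I=1}^{2n} (ê_Iφ/|∇_bφ|)·ê_Iρ. Then for the function φ := ρ⁴ − c (c > 0 a constant), one has |∇_bφ| = 4rρ² and H_φ = 0 at every point with r ≠ 0; in particular the Heisenberg spheres {ρ⁴ = c} are horizontally (p-)minimal hypersurfaces of the Heisenberg cylinder. -/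
open Set Finset

noncomputable section

/-! Horizontal derivatives of the basic quantities are polynomial: `ê_I(r²) = 2x_I`,
`ê_I z = s_I` with `(s_I) = (y, −x)`, and `ê_I(ρ⁴) = F_I := 4r²x_I + 8z s_I`. The identities
`Σ x_I² = Σ s_I² = r²` and `Σ x_I s_I = 0` give `Σ F_I² = 16r²ρ⁴`, hence `|∇_bφ| = 4rρ²`, and
`Σ x_I F_I = 4r⁴`, `Σ ê_I F_I = 8(n+2)r²`. The quotient rule then yields
`Σ ê_I(F_I/|∇_bφ|) = (2n+1) r/ρ²`, while `ê_Iρ = ρF_I/(4ρ⁴)` yields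
`Σ (F_I/|∇_bφ|) ê_Iρ = r/ρ`, so the two terms of `H_φ` cancel. -/

namespace Heisenberg

section DirectionalDerivative

variable {N : ℕ} {X : (Fin N → ℝ) → Fin N → ℝ} {f g : (Fin N → ℝ) → ℝ} {x : Fin N → ℝ}

theorem cv_eq_apply {k : ℕ} (hk : k < N) : cv N k = fun y => y ⟨k, hk⟩ := by
  funext y; exact dif_pos hk

theorem cv_apply {k : ℕ} (hk : k < N) (y : Fin N → ℝ) : cv N k y = y ⟨k, hk⟩ := dif_pos hk

theorem cv_eq_zero {k : ℕ} (hk : ¬k < N) : cv N k = fun _ => 0 := by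
  funext y; exact dif_neg hk

@[fun_prop]
theorem differentiable_cv (k : ℕ) : Differentiable ℝ (cv N k) := by
  by_cases hk : k < N
  · rw [cv_eq_apply hk]; fun_prop
  · rw [cv_eq_zero hk]; fun_prop

theorem vApp_cv (k : ℕ) : vApp X (cv N k) x = cv N k (X x) := by
  by_cases hk : k < N
  · rw [vApp, cv_eq_apply hk, fderiv_apply differentiableAt_id]; simp
  · rw [vApp, cv_eq_zero hk, fderiv_const_apply]; rfl

theorem vApp_add (hf : DifferentiableAt ℝ f x) (hg : DifferentiableAt ℝ g x) :
    vApp X (fun y => f y + g y) x = vApp X f x + vApp X g x := by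
  simp [vApp, fderiv_fun_add hf hg]

theorem vApp_sub_const (c : ℝ) : vApp X (fun y => f y - c) x = vApp X f x := by
  simp [vApp, fderiv_sub_const]

theorem vApp_const (c : ℝ) : vApp X (fun _ => c) x = 0 := by
  simp [vApp]

theorem vApp_neg : vApp X (fun y => -f y) x = -vApp X f x := by
  simp [vApp]

theorem vApp_const_mul (c : ℝ) (hf : DifferentiableAt ℝ f x) :
    vApp X (fun y => c * f y) x = c * vApp X f x := by
  simp [vApp, fderiv_const_mul hf]

theorem vApp_mul (hf : DifferentiableAt ℝ f x) (hg : DifferentiableAt ℝ g x) :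
    vApp X (fun y => f y * g y) x = vApp X f x * g x + f x * vApp X g x := by
  simp [vApp, fderiv_fun_mul hf hg]; ring

theorem vApp_pow (k : ℕ) (hf : DifferentiableAt ℝ f x) :
    vApp X (fun y => f y ^ k) x = k * f x ^ (k - 1) * vApp X f x := by
  simp [vApp, fderiv_fun_pow k hf]

theorem vApp_sum {ι : Type*} (s : Finset ι) {F : ι → (Fin N → ℝ) → ℝ}
    (hF : ∀ i ∈ s, DifferentiableAt ℝ (F i) x) :
    vApp X (fun y => ∑ i ∈ s, F i y) x = ∑ i ∈ s, vApp X (F i) x := by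
  simp [vApp, fderiv_fun_sum hF]

theorem vApp_div (hf : DifferentiableAt ℝ f x) (hg : DifferentiableAt ℝ g x) (hgx : g x ≠ 0) :
    vApp X (fun y => f y / g y) x = (vApp X f x * g x - f x * vApp X g x) / g x ^ 2 := by
  have h := hf.hasFDerivAt.mul ((hasDerivAt_inv hgx).comp_hasFDerivAt x hg.hasFDerivAt)
  have e : (fun y => f y / g y) = f * (fun y => y⁻¹) ∘ g := by
    funext y; simp [div_eq_mul_inv]
  rw [vApp, e, h.fderiv]
  simp [vApp]
  field_simp
  ring

theorem vApp_sqrt (hf : DifferentiableAt ℝ f x) (hfx : f x ≠ 0) :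
    vApp X (fun y => √(f y)) x = vApp X f x / (2 * √(f x)) := by
  simp [vApp, fderiv_sqrt hf hfx]; ring

theorem vApp_rpow_const (p : ℝ) (hf : DifferentiableAt ℝ f x) (hfx : f x ≠ 0) :
    vApp X (fun y => f y ^ p) x = p * f x ^ (p - 1) * vApp X f x := by
  rw [vApp, (hf.hasFDerivAt.rpow_const (p := p) (Or.inl hfx)).fderiv]
  simp [vApp]

end DirectionalDerivative

variable {n : ℕ}

-- In the notation above: `rSq = r²`, `rho4 = ρ⁴`, `hVz n I = s_I` (the `∂_z`-coefficient of
-- `ê_I`) and `hVrho4 n I = F_I`.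
def rSq (n : ℕ) (y : Fin (2 * n + 1) → ℝ) : ℝ :=
  ∑ I : Fin (2 * n), cv (2 * n + 1) (I : ℕ) y ^ 2

def rho4 (n : ℕ) (y : Fin (2 * n + 1) → ℝ) : ℝ :=
  rSq n y ^ 2 + 4 * cv (2 * n + 1) (2 * n) y ^ 2

def hVz (n I : ℕ) (y : Fin (2 * n + 1) → ℝ) : ℝ :=
  if I < n then cv (2 * n + 1) (n + I) y else -cv (2 * n + 1) (I - n) y

def hVrho4 (n I : ℕ) (y : Fin (2 * n + 1) → ℝ) : ℝ :=
  4 * rSq n y * cv (2 * n + 1) I y + 8 * cv (2 * n + 1) (2 * n) y * hVz n I y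

theorem rSq_nonneg (y : Fin (2 * n + 1) → ℝ) : 0 ≤ rSq n y :=
  Finset.sum_nonneg fun _ _ => sq_nonneg _

theorem rho4_nonneg (y : Fin (2 * n + 1) → ℝ) : 0 ≤ rho4 n y := by
  unfold rho4; positivity

theorem rho4_pos {y : Fin (2 * n + 1) → ℝ} (hu : 0 < rSq n y) : 0 < rho4 n y := by
  unfold rho4; positivity

@[fun_prop]
theorem differentiable_rSq : Differentiable ℝ (rSq n) := by
  unfold rSq; fun_prop

@[fun_prop]
theorem differentiable_rho4 : Differentiable ℝ (rho4 n) := by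
  unfold rho4; fun_prop

@[fun_prop]
theorem differentiable_hVz (I : ℕ) : Differentiable ℝ (hVz n I) := by
  unfold hVz; split_ifs <;> fun_prop

@[fun_prop]
theorem differentiable_hVrho4 (I : ℕ) : Differentiable ℝ (hVrho4 n I) := by
  unfold hVrho4; fun_prop

theorem cv_hV (I : ℕ) {k : ℕ} (hk : k < 2 * n + 1) (y : Fin (2 * n + 1) → ℝ) :
    cv (2 * n + 1) k (hV n I y) = (if k = I then 1 else 0) + (if k = 2 * n then hVz n I y else 0) := by
  rw [cv_apply hk]
  by_cases hI : I < n
  · simp only [hV, hVz, hI, if_true, ee, Pi.add_apply, Pi.smul_apply, smul_eq_mul]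
    split_ifs <;> simp_all
  · simp only [hV, hVz, hI, if_false, ee, Pi.sub_apply, Pi.smul_apply, smul_eq_mul]
    split_ifs <;> simp_all [sub_eq_add_neg]

theorem vApp_hV_cv_of_lt (I : Fin (2 * n)) {k : ℕ} (hk : k < 2 * n) (y : Fin (2 * n + 1) → ℝ) :
    vApp (hV n I) (cv (2 * n + 1) k) y = if k = I then 1 else 0 := by
  rw [vApp_cv, cv_hV I (by omega), if_neg (show k ≠ 2 * n by omega), add_zero]

theorem vApp_hV_cv_two_mul (I : Fin (2 * n)) (y : Fin (2 * n + 1) → ℝ) :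
    vApp (hV n I) (cv (2 * n + 1) (2 * n)) y = hVz n I y := by
  rw [vApp_cv, cv_hV I (by omega), if_neg (by omega), if_pos rfl, zero_add]

theorem vApp_hV_rSq (I : Fin (2 * n)) (y : Fin (2 * n + 1) → ℝ) :
    vApp (hV n I) (rSq n) y = 2 * cv (2 * n + 1) I y := by
  unfold rSq
  rw [vApp_sum _ fun _ _ => by fun_prop]
  simp only [vApp_pow 2 ((differentiable_cv _).differentiableAt), vApp_hV_cv_of_lt I (Fin.is_lt _)]
  simp [Fin.val_inj]

theorem vApp_hV_hVz (I : Fin (2 * n)) (y : Fin (2 * n + 1) → ℝ) :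
    vApp (hV n I) (hVz n I) y = 0 := by
  have hI := I.is_lt
  unfold hVz
  split_ifs with h
  · rw [vApp_hV_cv_of_lt I (by omega), if_neg (by omega)]
  · rw [vApp_neg, vApp_hV_cv_of_lt I (by omega), if_neg (by omega), neg_zero]

theorem vApp_hV_rho4 (I : Fin (2 * n)) (y : Fin (2 * n + 1) → ℝ) :
    vApp (hV n I) (rho4 n) y = hVrho4 n I y := by
  unfold rho4 hVrho4
  simp (disch := fun_prop) only [vApp_add, vApp_const_mul, vApp_pow, vApp_hV_rSq,
    vApp_hV_cv_two_mul]
  push_cast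
  ring

theorem vApp_hV_hVrho4 (I : Fin (2 * n)) (y : Fin (2 * n + 1) → ℝ) :
    vApp (hV n I) (hVrho4 n I) y =
      4 * rSq n y + 8 * cv (2 * n + 1) I y ^ 2 + 8 * hVz n I y ^ 2 := by
  unfold hVrho4
  simp (disch := fun_prop) only [vApp_add, vApp_mul, vApp_const, vApp_hV_rSq,
    vApp_hV_cv_of_lt I I.is_lt, if_true, vApp_hV_cv_two_mul, vApp_hV_hVz]
  ring

theorem sum_fin_two_mul (g : ℕ → ℝ) :
    ∑ I : Fin (2 * n), g I = ∑ i ∈ range n, (g i + g (n + i)) := by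
  rw [Fin.sum_univ_eq_sum_range g, two_mul, Finset.sum_range_add, Finset.sum_add_distrib]

theorem sum_hVz_sq (y : Fin (2 * n + 1) → ℝ) : ∑ I : Fin (2 * n), hVz n I y ^ 2 = rSq n y := by
  rw [sum_fin_two_mul (fun I => hVz n I y ^ 2), rSq,
    sum_fin_two_mul (fun I => cv (2 * n + 1) I y ^ 2)]
  refine Finset.sum_congr rfl fun i hi => ?_
  have hi : i < n := Finset.mem_range.mp hi
  simp [hVz, hi]
  ring

theorem sum_cv_mul_hVz (y : Fin (2 * n + 1) → ℝ) :
    ∑ I : Fin (2 * n), cv (2 * n + 1) I y * hVz n I y = 0 := by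
  rw [sum_fin_two_mul (fun I => cv (2 * n + 1) I y * hVz n I y)]
  refine Finset.sum_eq_zero fun i hi => ?_
  have hi : i < n := Finset.mem_range.mp hi
  simp [hVz, hi]
  ring

theorem sum_hVrho4_sq (y : Fin (2 * n + 1) → ℝ) :
    ∑ I : Fin (2 * n), hVrho4 n I y ^ 2 = 16 * rSq n y * rho4 n y := by
  have expand : ∀ I : Fin (2 * n), hVrho4 n I y ^ 2 =
      16 * rSq n y ^ 2 * cv (2 * n + 1) I y ^ 2
        + 64 * rSq n y * cv (2 * n + 1) (2 * n) y * (cv (2 * n + 1) I y * hVz n I y)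
        + 64 * cv (2 * n + 1) (2 * n) y ^ 2 * hVz n I y ^ 2 := by
    intro I; unfold hVrho4; ring
  simp only [expand, Finset.sum_add_distrib, ← Finset.mul_sum, sum_hVz_sq, sum_cv_mul_hVz]
  rw [← rSq, rho4]
  ring

theorem sum_cv_mul_hVrho4 (y : Fin (2 * n + 1) → ℝ) :
    ∑ I : Fin (2 * n), cv (2 * n + 1) I y * hVrho4 n I y = 4 * rSq n y ^ 2 := by
  have expand : ∀ I : Fin (2 * n), cv (2 * n + 1) I y * hVrho4 n I y =
      4 * rSq n y * cv (2 * n + 1) I y ^ 2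
        + 8 * cv (2 * n + 1) (2 * n) y * (cv (2 * n + 1) I y * hVz n I y) := by
    intro I; unfold hVrho4; ring
  simp only [expand, Finset.sum_add_distrib, ← Finset.mul_sum, sum_cv_mul_hVz]
  rw [← rSq]
  ring

theorem sum_vApp_hV_hVrho4 (y : Fin (2 * n + 1) → ℝ) :
    ∑ I : Fin (2 * n), vApp (hV n I) (hVrho4 n I) y = 8 * (n + 2) * rSq n y := by
  simp only [vApp_hV_hVrho4, Finset.sum_add_distrib, ← Finset.mul_sum, sum_hVz_sq,
    Finset.sum_const, Finset.card_univ, Fintype.card_fin, nsmul_eq_mul]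
  rw [← rSq]
  push_cast
  ring

theorem vApp_hV_rho4_sub (c : ℝ) (I : Fin (2 * n)) (y : Fin (2 * n + 1) → ℝ) :
    vApp (hV n I) (fun y => rho4 n y - c) y = hVrho4 n I y := by
  rw [vApp_sub_const, vApp_hV_rho4]

theorem nb_rho4_sub (c : ℝ) (y : Fin (2 * n + 1) → ℝ) :
    nb n (fun y => rho4 n y - c) y = 4 * √(rSq n y) * √(rho4 n y) := by
  rw [nb]
  simp only [vApp_hV_rho4_sub, sum_hVrho4_sq]
  rw [Real.sqrt_mul (by positivity [rSq_nonneg y]), Real.sqrt_mul (by norm_num),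
    show (16 : ℝ) = 4 ^ 2 by norm_num, Real.sqrt_sq (by norm_num)]

theorem rho_eq_rpow : rho n = fun y => rho4 n y ^ (1 / 4 : ℝ) := rfl

theorem sqrt_rho4 (y : Fin (2 * n + 1) → ℝ) : √(rho4 n y) = rho n y ^ 2 := by
  rw [rho_eq_rpow, ← Real.rpow_natCast, ← Real.rpow_mul (rho4_nonneg y), Real.sqrt_eq_rpow]
  norm_num

theorem vApp_hV_rho {x : Fin (2 * n + 1) → ℝ} (hP : rho4 n x ≠ 0) (I : Fin (2 * n)) :
    vApp (hV n I) (rho n) x = rho n x / (4 * rho4 n x) * hVrho4 n I x := by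
  rw [rho_eq_rpow, vApp_rpow_const _ (by fun_prop) hP, Real.rpow_sub_one hP, vApp_hV_rho4]
  ring

theorem differentiableAt_nb_rho4_sub (c : ℝ) {x : Fin (2 * n + 1) → ℝ} (hu : 0 < rSq n x) :
    DifferentiableAt ℝ (nb n (fun y => rho4 n y - c)) x := by
  rw [funext (nb_rho4_sub c)]
  fun_prop (disch := first | exact hu.ne' | exact (rho4_pos hu).ne')

theorem vApp_hV_nb_rho4_sub (c : ℝ) {x : Fin (2 * n + 1) → ℝ} (hu : 0 < rSq n x)
    (I : Fin (2 * n)) :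
    vApp (hV n I) (nb n (fun y => rho4 n y - c)) x =
      4 * √(rho4 n x) / √(rSq n x) * cv (2 * n + 1) I x
        + 2 * √(rSq n x) / √(rho4 n x) * hVrho4 n I x := by
  have hP := rho4_pos hu
  rw [funext (nb_rho4_sub c)]
  rw [vApp_mul (by fun_prop (disch := exact hu.ne')) (by fun_prop (disch := exact hP.ne')),
    vApp_const_mul _ (by fun_prop (disch := exact hu.ne')), vApp_sqrt (by fun_prop) hu.ne',
    vApp_sqrt (by fun_prop) hP.ne', vApp_hV_rSq, vApp_hV_rho4]
  field_simp
  ring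

theorem sum_vApp_hV_div_nb (c : ℝ) {x : Fin (2 * n + 1) → ℝ} (hu : 0 < rSq n x) :
    ∑ I : Fin (2 * n), vApp (hV n I)
        (fun y => vApp (hV n I) (fun y => rho4 n y - c) y / nb n (fun y => rho4 n y - c) y) x
      = (2 * n + 1) * √(rSq n x) / √(rho4 n x) := by
  have hP := rho4_pos hu
  set N := nb n (fun y => rho4 n y - c) x with hN
  have quotient_rule : ∀ I : Fin (2 * n),
      vApp (hV n I) (fun y => hVrho4 n I y / nb n (fun y => rho4 n y - c) y) x =
        (N * vApp (hV n I) (hVrho4 n I) x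
          - 4 * √(rho4 n x) / √(rSq n x) * (cv (2 * n + 1) I x * hVrho4 n I x)
          - 2 * √(rSq n x) / √(rho4 n x) * hVrho4 n I x ^ 2) / N ^ 2 := by
    intro I
    rw [vApp_div (by fun_prop) (differentiableAt_nb_rho4_sub c hu)
      (by rw [nb_rho4_sub]; positivity), vApp_hV_nb_rho4_sub c hu]
    ring
  simp only [vApp_hV_rho4_sub, quotient_rule, ← Finset.sum_div, Finset.sum_sub_distrib,
    ← Finset.mul_sum, sum_vApp_hV_hVrho4, sum_cv_mul_hVrho4, sum_hVrho4_sq]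
  rw [hN, nb_rho4_sub]
  field_simp
  rw [show √(rSq n x) ^ 4 = (√(rSq n x) ^ 2) ^ 2 by ring, Real.sq_sqrt hu.le, Real.sq_sqrt hP.le]
  ring

theorem sum_div_nb_mul_vApp_hV_rho (c : ℝ) {x : Fin (2 * n + 1) → ℝ} (hu : 0 < rSq n x) :
    ∑ I : Fin (2 * n), vApp (hV n I) (fun y => rho4 n y - c) x / nb n (fun y => rho4 n y - c) x
        * vApp (hV n I) (rho n) x
      = rho n x * √(rSq n x) / √(rho4 n x) := by
  have hP := rho4_pos hu
  have collect : ∀ I : Fin (2 * n),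
      hVrho4 n I x / (4 * √(rSq n x) * √(rho4 n x)) * (rho n x / (4 * rho4 n x) * hVrho4 n I x) =
        rho n x / (16 * √(rSq n x) * √(rho4 n x) * rho4 n x) * hVrho4 n I x ^ 2 := by
    intro I; ring
  simp only [vApp_hV_rho4_sub, nb_rho4_sub, vApp_hV_rho hP.ne', collect, ← Finset.mul_sum,
    sum_hVrho4_sq]
  field_simp
  rw [Real.sq_sqrt hu.le]

end Heisenberg

open Heisenberg

theorem heisenberg_spheres_are_minimal_general
    (n : ℕ) (c : ℝ) :
    ∀ x : Fin (2 * n + 1) → ℝ, rad n x ≠ 0 →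
      nb n (fun y => (∑ I : Fin (2 * n), (cv (2 * n + 1) (I : ℕ) y) ^ 2) ^ 2
          + 4 * (cv (2 * n + 1) (2 * n) y) ^ 2 - c) x
        = 4 * rad n x * (rho n x) ^ 2 ∧
      Hcyl n (fun y => (∑ I : Fin (2 * n), (cv (2 * n + 1) (I : ℕ) y) ^ 2) ^ 2
          + 4 * (cv (2 * n + 1) (2 * n) y) ^ 2 - c) x = 0 := by
  intro x hr
  have hu : 0 < rSq n x := Real.sqrt_ne_zero'.mp hr
  change nb n (fun y => rho4 n y - c) x = _ ∧ Hcyl n (fun y => rho4 n y - c) x = 0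
  refine ⟨by rw [nb_rho4_sub, sqrt_rho4]; rfl, ?_⟩
  rw [Hcyl, sum_vApp_hV_div_nb c hu, sum_div_nb_mul_vApp_hV_rho c hu]
  ring

/-- Proposition 6.1(b): for `φ = ρ⁴ − c` one has
`|∇_bφ| = 4rρ²` and `H_φ = 0` wherever `r ≠ 0`; i.e. the Heisenberg spheres
`{ρ⁴ = c}` are horizontally (p-)minimal hypersurfaces of the Heisenberg
cylinder. -/
theorem heisenberg_spheres_are_minimal
    (n : ℕ) (hn : 1 ≤ n) (c : ℝ) (hc : 0 < c) :
    ∀ x : Fin (2 * n + 1) → ℝ, rad n x ≠ 0 →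
      nb n (fun y => (∑ I : Fin (2 * n), (cv (2 * n + 1) (I : ℕ) y) ^ 2) ^ 2
          + 4 * (cv (2 * n + 1) (2 * n) y) ^ 2 - c) x
        = 4 * rad n x * (rho n x) ^ 2 ∧
      Hcyl n (fun y => (∑ I : Fin (2 * n), (cv (2 * n + 1) (I : ℕ) y) ^ 2) ^ 2
          + 4 * (cv (2 * n + 1) (2 * n) y) ^ 2 - c) x = 0 :=
  heisenberg_spheres_are_minimal_general n c
end
end
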